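/- arXiv:1604.08053 — 4 statements merged into one kernel-verified Lean document; each statement's English description precedes it below -/
import Mathlib

section
/- Let G be a cubic bipartite graph and let e, f ∈ E(G) be two edges such that every 3-edge-cut of G contains at most one of e and f. Then G has a perfect matching containing both e and f. -/
open Finset SimpleGraph

attribute [local instance] Classical.propDecidable

variable {V : Type}

/-- `σ` is a valid `±1` signature on the edges of `G`. -/
def IsSignature (G : SimpleGraph V) (σ : Sym2 V → ℤ) : Prop :=
  ∀ e ∈ G.edgeSet, σ e = 1 ∨ σ e = -1

/-- The set of negative edges of the signed graph `(G, σ)`. -/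
def NegEdges (G : SimpleGraph V) (σ : Sym2 V → ℤ) : Set (Sym2 V) :=
  {e | e ∈ G.edgeSet ∧ σ e = -1}

/-- A bidirected orientation of the signed graph `(G, σ)`: `τ v e = 1` means that the
half-edge of `e` at `v` points towards `v`, and `τ v e = -1` that it points away from `v`.
On a positive edge the two half-edges are directed consistently, while on a negative edge
both half-edges point outwards (extroverted) or both point inwards (introverted). -/
def IsOrientation (G : SimpleGraph V) (σ : Sym2 V → ℤ) (τ : V → Sym2 V → ℤ) : Prop :=
  (∀ v e, τ v e = 1 ∨ τ v e = -1) ∧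
  ∀ u v, G.Adj u v → τ u s(u, v) * τ v s(u, v) = - σ s(u, v)

/-- `(τ, φ)` is an integer-valued flow on the signed graph `(G, σ)`:
Kirchhoff's law holds at every vertex. -/
def IsFlow [Fintype V] (G : SimpleGraph V) (σ : Sym2 V → ℤ)
    (τ : V → Sym2 V → ℤ) (φ : Sym2 V → ℤ) : Prop :=
  IsOrientation G σ τ ∧
    ∀ v : V, (∑ w : V, if G.Adj v w then τ v s(v, w) * φ s(v, w) else 0) = 0

/-- `(τ, φ)` is a nowhere-zero `k`-flow on `(G, σ)`. -/
def IsNZFlow [Fintype V] (G : SimpleGraph V) (σ : Sym2 V → ℤ) (k : ℤ)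
    (τ : V → Sym2 V → ℤ) (φ : Sym2 V → ℤ) : Prop :=
  IsFlow G σ τ φ ∧ ∀ e ∈ G.edgeSet, 0 < |φ e| ∧ |φ e| < k

/-- A signed graph is flow-admissible if it admits a nowhere-zero `k`-flow for some `k`. -/
def FlowAdmissible [Fintype V] (G : SimpleGraph V) (σ : Sym2 V → ℤ) : Prop :=
  ∃ (k : ℤ) (τ : V → Sym2 V → ℤ) (φ : Sym2 V → ℤ), IsNZFlow G σ k τ φ

/-- The flow number `F(G, σ)`: the least `k` admitting a nowhere-zero `k`-flow. -/
noncomputable def flowNumber [Fintype V] (G : SimpleGraph V) (σ : Sym2 V → ℤ) : ℕ :=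
  sInf {k : ℕ | ∃ τ φ, IsNZFlow G σ (k : ℤ) τ φ}

/-- An edge-cut of `G`: the set of edges crossing a nontrivial vertex partition. -/
def IsEdgeCut (G : SimpleGraph V) (X : Set (Sym2 V)) : Prop :=
  ∃ S : Set V, S.Nonempty ∧ Sᶜ.Nonempty ∧
    X = {e | e ∈ G.edgeSet ∧ ∃ a ∈ S, ∃ b ∈ Sᶜ, e = s(a, b)}

/-- The all-positive signature. -/
def allPos : Sym2 V → ℤ := fun _ => 1

/-- `G` is cubic (3-regular). -/
def CubicGraph (G : SimpleGraph V) : Prop := ∀ v : V, (G.neighborSet v).ncard = 3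

/-- `G` has no bridge. -/
def Bridgeless (G : SimpleGraph V) : Prop := ∀ e ∈ G.edgeSet, ¬ G.IsBridge e

/-- A walk is directed (with respect to the orientation `τ` of `(G, σ)`) if every dart of
the walk traverses a positive edge in the direction of its orientation. -/
def IsDirectedWalk {G : SimpleGraph V} (σ : Sym2 V → ℤ) (τ : V → Sym2 V → ℤ) {u v : V}
    (p : G.Walk u v) : Prop :=
  ∀ d ∈ p.darts, σ s(d.toProd.1, d.toProd.2) = 1 ∧
    τ d.toProd.2 s(d.toProd.1, d.toProd.2) = 1

/-- `M` is a perfect matching (1-factor) of `G`. -/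
def IsPM (G : SimpleGraph V) (M : Set (Sym2 V)) : Prop :=
  M ⊆ G.edgeSet ∧ ∀ v : V, ∃! e, e ∈ M ∧ v ∈ e

/-- `c` is a proper 3-edge-coloring of `G`. -/
def IsProper3EdgeColoring (G : SimpleGraph V) (c : Sym2 V → Fin 3) : Prop :=
  ∀ e₁ ∈ G.edgeSet, ∀ e₂ ∈ G.edgeSet, e₁ ≠ e₂ → (∃ w, w ∈ e₁ ∧ w ∈ e₂) → c e₁ ≠ c e₂


/-!
The prescribed edges `a₁b₁` and `a₂b₂` are vertex-disjoint, since otherwise the three edges at a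
common vertex form a 3-edge-cut containing both. With `a₁, a₂` in the side `s` of a bipartition
`(s, t)`, it suffices by Hall's theorem to match `s \ {a₁, a₂}` into `t \ {b₁, b₂}`. For
`S ⊆ s \ {a₁, a₂}` with neighbourhood `N`, double counting shows that the cut around `S ∪ N` has
exactly `3 (|N| - |S|)` edges, and it contains `aᵢbᵢ` whenever `bᵢ ∈ N`. Hence
`|N| ≥ |S| + #{i | bᵢ ∈ N}`, unless both `bᵢ` lie in `N` and `|N| = |S| + 1`; but then this cut is a
3-edge-cut containing both prescribed edges.
-/

theorem CubicGraph.isRegularOfDegree [Fintype V] {G : SimpleGraph V} (hG : CubicGraph G) :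
    G.IsRegularOfDegree 3 := fun v => by
  rw [← card_neighborFinset_eq_degree, neighborFinset_def, ← Set.ncard_eq_toFinset_card', hG v]

namespace SimpleGraph

section

variable {G : SimpleGraph V} {s t : Finset V}

def edgeBoundary (G : SimpleGraph V) (W : Set V) : Set (Sym2 V) :=
  {e | e ∈ G.edgeSet ∧ ∃ a ∈ W, ∃ b ∈ Wᶜ, e = s(a, b)}

theorem isEdgeCut_edgeBoundary {W : Set V} (hW : W.Nonempty) (hWc : Wᶜ.Nonempty) :
    IsEdgeCut G (G.edgeBoundary W) :=
  ⟨W, hW, hWc, rfl⟩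

theorem mk_mem_edgeBoundary {W : Set V} {a b : V} (h : G.Adj a b) (ha : a ∈ W) (hb : b ∉ W) :
    s(a, b) ∈ G.edgeBoundary W :=
  ⟨h, a, ha, b, hb, rfl⟩

theorem edgeBoundary_singleton (v : V) : G.edgeBoundary {v} = G.incidenceSet v := by
  ext e
  refine ⟨fun ⟨he, a, ha, b, _, hab⟩ => ⟨he, ?_⟩, fun ⟨he, hv⟩ => ?_⟩
  · rw [Set.mem_singleton_iff.mp ha] at hab
    exact hab ▸ Sym2.mem_mk_left v b
  · obtain ⟨w, rfl⟩ := (Sym2.mem_iff_exists).mp hv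
    exact mk_mem_edgeBoundary he rfl (G.ne_of_adj he).symm

theorem IsBipartiteWith.exists_eq_mk_of_mem_edgeSet {s t : Set V} (hst : G.IsBipartiteWith s t)
    {e : Sym2 V} (he : e ∈ G.edgeSet) : ∃ a b, G.Adj a b ∧ a ∈ s ∧ e = s(a, b) := by
  induction e using Sym2.ind with
  | _ x y =>
    rcases hst.mem_of_adj he with ⟨hx, -⟩ | ⟨-, hy⟩
    · exact ⟨x, y, he, hx, rfl⟩
    · exact ⟨y, x, G.adj_symm he, hy, Sym2.eq_swap⟩

theorem isPM_image_of_injOn (hst : G.IsBipartiteWith ↑s ↑t) (hcover : ∀ v, v ∈ s ∨ v ∈ t)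
    (hcard : #s = #t) {f : V → V} (hadj : ∀ a ∈ s, G.Adj a (f a)) (hinj : Set.InjOn f s) :
    IsPM G ((fun a => s(a, f a)) '' s) := by
  have hft : ∀ a ∈ s, f a ∈ t := fun a ha => hst.mem_of_mem_adj ha (hadj a ha)
  have hst' : ∀ v, v ∈ s → v ∉ t := fun _ hv => Set.disjoint_left.mp hst.disjoint (mem_coe.mpr hv)
  have himage : s.image f = t :=
    eq_of_subset_of_card_le (image_subset_iff.mpr hft) (by rw [card_image_of_injOn hinj, hcard])
  refine ⟨fun _ ⟨a, ha, he⟩ => he ▸ hadj a ha, fun v => ?_⟩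
  rcases hcover v with hv | hv
  · refine ⟨s(v, f v), ⟨⟨v, hv, rfl⟩, Sym2.mem_mk_left _ _⟩, ?_⟩
    rintro _ ⟨⟨a, ha, rfl⟩, hva⟩
    rcases Sym2.mem_iff.mp hva with rfl | rfl
    · rfl
    · exact absurd (hft a ha) (hst' _ hv)
  · obtain ⟨a, ha, rfl⟩ := mem_image.mp (himage ▸ hv)
    refine ⟨s(a, f a), ⟨⟨a, ha, rfl⟩, Sym2.mem_mk_right _ _⟩, ?_⟩
    rintro _ ⟨⟨a', ha', rfl⟩, hva⟩
    rcases Sym2.mem_iff.mp hva with h | h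
    · exact absurd hv (h ▸ hst' _ ha')
    · rw [hinj ha' ha h.symm]

end

variable [Fintype V] {G : SimpleGraph V} {k : ℕ} {s t : Finset V} {a₁ a₂ b₁ b₂ : V}

theorem IsRegularOfDegree.exists_isEdgeCut_of_mem_of_mem (hG : G.IsRegularOfDegree k)
    {e f : Sym2 V} (he : e ∈ G.edgeSet) (hf : f ∈ G.edgeSet) {v : V} (hve : v ∈ e)
    (hvf : v ∈ f) : ∃ X, IsEdgeCut G X ∧ X.ncard = k ∧ e ∈ X ∧ f ∈ X := by
  obtain ⟨w, rfl⟩ := (Sym2.mem_iff_exists).mp hve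
  refine ⟨G.edgeBoundary {v}, isEdgeCut_edgeBoundary ⟨v, rfl⟩ ⟨w, (G.ne_of_adj he).symm⟩, ?_,
    mk_mem_edgeBoundary he rfl (G.ne_of_adj he).symm, ?_⟩
  · rw [edgeBoundary_singleton, ← coe_incidenceFinset, Set.ncard_coe_finset,
      card_incidenceFinset_eq_degree, hG.degree_eq]
  · rw [edgeBoundary_singleton]
    exact ⟨hf, hvf⟩

theorem IsBipartite.exists_finset_isBipartiteWith (h : G.IsBipartite)
    (hG : ∀ v, ∃ w, G.Adj v w) :
    ∃ s t : Finset V, G.IsBipartiteWith ↑s ↑t ∧ ∀ v, v ∈ s ∨ v ∈ t := by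
  obtain ⟨s, t, hst⟩ := h.exists_isBipartiteWith
  refine ⟨s.toFinset, t.toFinset, by simpa using hst, fun v => ?_⟩
  obtain ⟨w, hw⟩ := hG v
  simpa using (hst.mem_of_adj hw).imp And.left And.left

theorem IsBipartiteWith.card_eq_of_isRegularOfDegree
    (hst : G.IsBipartiteWith ↑s ↑t) (hG : G.IsRegularOfDegree k) (hk : 0 < k) : #s = #t := by
  have h := isBipartiteWith_sum_degrees_eq hst
  simp only [hG.degree_eq, sum_const, smul_eq_mul] at h
  exact Nat.eq_of_mul_eq_mul_right hk h

theorem IsBipartiteWith.biUnion_neighborFinset_subset (hst : G.IsBipartiteWith ↑s ↑t)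
    {S : Finset V} (hS : S ⊆ s) : S.biUnion (G.neighborFinset ·) ⊆ t :=
  biUnion_subset.mpr fun _ ha => isBipartiteWith_neighborFinset_subset hst (hS ha)

theorem sum_card_neighborFinset_inter (hG : G.IsRegularOfDegree k) {S N : Finset V}
    (hSN : ∀ a ∈ S, G.neighborFinset a ⊆ N) :
    ∑ b ∈ N, #(G.neighborFinset b ∩ S) = k * #S := by
  have h := sum_card_bipartiteAbove_eq_sum_card_bipartiteBelow (s := S) (t := N) G.Adj
  have hab : ∀ a ∈ S, bipartiteAbove G.Adj N a = G.neighborFinset a := fun a ha => by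
    ext b; simpa [bipartiteAbove] using fun hb => hSN a ha ((mem_neighborFinset _ _ _).mpr hb)
  have hbe : ∀ b, bipartiteBelow G.Adj S b = G.neighborFinset b ∩ S := fun b => by
    ext a; simp [bipartiteBelow, G.adj_comm, and_comm]
  rw [sum_congr rfl fun a ha => by rw [hab a ha, card_neighborFinset_eq_degree, hG.degree_eq],
    sum_const, smul_eq_mul] at h
  simp only [hbe] at h
  rw [← h, mul_comm]

theorem edgeBoundary_union_biUnion_neighborFinset (hst : G.IsBipartiteWith ↑s ↑t) {S : Finset V}
    (hS : S ⊆ s) :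
    G.edgeBoundary ↑(S ∪ S.biUnion (G.neighborFinset ·)) =
      ((S.biUnion (G.neighborFinset ·)).sigma fun b => G.neighborFinset b \ S).image
        fun p => s(p.1, p.2) := by
  set N := S.biUnion (G.neighborFinset ·)
  have hSN : ∀ {a b}, a ∈ S → G.Adj a b → b ∈ N := fun ha h =>
    mem_biUnion.mpr ⟨_, ha, (mem_neighborFinset _ _ _).mpr h⟩
  have hN : N ⊆ t := hst.biUnion_neighborFinset_subset hS
  ext e
  simp only [edgeBoundary, coe_image, coe_sigma, coe_union, Set.mem_ofPred_eq, Set.mem_image,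
    Set.mem_sigma_iff, Set.mem_union, Set.mem_compl_iff, mem_coe, mem_sdiff, mem_neighborFinset]
  constructor
  · rintro ⟨he, a, ha, b, hb, rfl⟩
    have hab : G.Adj a b := he
    rcases ha with ha | ha
    · exact absurd (Or.inr (hSN ha hab)) hb
    · exact ⟨⟨a, b⟩, ⟨ha, hab, fun h => hb (Or.inl h)⟩, rfl⟩
  · rintro ⟨⟨b, a⟩, ⟨hb, hab, ha⟩, rfl⟩
    refine ⟨hab, b, Or.inr hb, a, ?_, rfl⟩
    rintro (ha' | ha')
    · exact ha ha'
    · exact Set.disjoint_left.mp hst.disjoint (hst.mem_of_mem_adj' (hN hb) (G.adj_symm hab))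
        (hN ha')

theorem ncard_edgeBoundary_union_biUnion_add (hG : G.IsRegularOfDegree k)
    (hst : G.IsBipartiteWith ↑s ↑t) {S : Finset V} (hS : S ⊆ s) :
    (G.edgeBoundary ↑(S ∪ S.biUnion (G.neighborFinset ·))).ncard + k * #S =
      k * #(S.biUnion (G.neighborFinset ·)) := by
  set N := S.biUnion (G.neighborFinset ·)
  have hN : N ⊆ t := hst.biUnion_neighborFinset_subset hS
  have hinj : Set.InjOn (fun p : (_ : V) × V => s(p.1, p.2))
      ↑(N.sigma fun b => G.neighborFinset b \ S) := by
    rintro ⟨b, a⟩ hp ⟨b', a'⟩ hp' h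
    simp only [coe_sigma, Set.mem_sigma_iff, mem_coe, mem_sdiff, mem_neighborFinset] at hp hp'
    rcases Sym2.eq_iff.mp h with ⟨rfl, rfl⟩ | ⟨hb, -⟩
    · rfl
    · change b = a' at hb
      have ha' : a' ∈ s := hst.mem_of_mem_adj' (hN hp'.1) (G.adj_symm hp'.2.1)
      exact absurd (hN (hb ▸ hp.1)) (Set.disjoint_left.mp hst.disjoint ha')
  rw [edgeBoundary_union_biUnion_neighborFinset hst hS, Set.ncard_coe_finset,
    card_image_of_injOn hinj, card_sigma, ← sum_card_neighborFinset_inter hG fun a ha =>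
      subset_biUnion_of_mem (G.neighborFinset ·) ha, ← sum_add_distrib]
  simp only [card_sdiff_add_card_inter, card_neighborFinset_eq_degree, hG.degree_eq, sum_const,
    smul_eq_mul, mul_comm]

theorem card_le_card_biUnion_neighborFinset_sdiff (hG : G.IsRegularOfDegree 3)
    (hst : G.IsBipartiteWith ↑s ↑t) (ha₁ : a₁ ∈ s) (ha₂ : a₂ ∈ s) (hb : b₁ ≠ b₂)
    (h₁ : G.Adj a₁ b₁) (h₂ : G.Adj a₂ b₂)
    (hcut : ∀ X, IsEdgeCut G X → X.ncard = 3 → ¬ (s(a₁, b₁) ∈ X ∧ s(a₂, b₂) ∈ X))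
    {S : Finset V} (hS : S ⊆ s \ {a₁, a₂}) :
    #S ≤ #(S.biUnion (G.neighborFinset ·) \ {b₁, b₂}) := by
  set N := S.biUnion (G.neighborFinset ·)
  set W : Set V := ↑(S ∪ N)
  have hSs : S ⊆ s := hS.trans sdiff_subset
  have hN : N ⊆ t := hst.biUnion_neighborFinset_subset hSs
  have hcount : (G.edgeBoundary W).ncard + 3 * #S = 3 * #N :=
    ncard_edgeBoundary_union_biUnion_add hG hst hSs
  have hsd := card_sdiff_add_card_inter N {b₁, b₂}
  have hout : ∀ {a}, a ∈ s → a ∉ S → a ∈ Wᶜ := fun ha haS => by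
    simp only [W, coe_union, Set.mem_compl_iff, Set.mem_union, mem_coe, not_or]
    exact ⟨haS, fun haN => Set.disjoint_left.mp hst.disjoint ha (hN haN)⟩
  have hmem : ∀ {a b}, a ∈ s → a ∉ S → G.Adj a b → b ∈ N → s(a, b) ∈ G.edgeBoundary W :=
    fun ha haS hab hb => Sym2.eq_swap ▸
      mk_mem_edgeBoundary (G.adj_symm hab) (by simp [W, hb]) (hout ha haS)
  have ha₁S : a₁ ∉ S := fun h => by simpa using hS h
  have ha₂S : a₂ ∉ S := fun h => by simpa using hS h
  by_cases hb₁ : b₁ ∈ N <;> by_cases hb₂ : b₂ ∈ N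
  · have hne : s(a₁, b₁) ≠ s(a₂, b₂) := fun h => by
      rcases Sym2.eq_iff.mp h with ⟨-, h⟩ | ⟨h, -⟩
      · exact hb h
      · exact Set.disjoint_left.mp hst.disjoint ha₁ (h ▸ hN hb₂)
    have h2 : 2 ≤ (G.edgeBoundary W).ncard := Set.ncard_pair hne ▸ Set.ncard_le_ncard
      (Set.insert_subset (hmem ha₁ ha₁S h₁ hb₁) (Set.singleton_subset_iff.mpr
        (hmem ha₂ ha₂S h₂ hb₂)))
    have h3 : (G.edgeBoundary W).ncard ≠ 3 := fun h3 =>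
      hcut _ (isEdgeCut_edgeBoundary ⟨b₁, by simp [W, hb₁]⟩ ⟨a₁, hout ha₁ ha₁S⟩) h3
        ⟨hmem ha₁ ha₁S h₁ hb₁, hmem ha₂ ha₂S h₂ hb₂⟩
    rw [inter_insert_of_mem hb₁, inter_singleton_of_mem hb₂, card_pair hb] at hsd
    omega
  · have h1 := (Set.ncard_pos).mpr ⟨_, hmem ha₁ ha₁S h₁ hb₁⟩
    rw [inter_insert_of_mem hb₁, inter_singleton_of_notMem hb₂, insert_empty, card_singleton]
      at hsd
    omega
  · have h1 := (Set.ncard_pos).mpr ⟨_, hmem ha₂ ha₂S h₂ hb₂⟩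
    rw [inter_insert_of_notMem hb₁, inter_singleton_of_mem hb₂, card_singleton] at hsd
    omega
  · rw [inter_insert_of_notMem hb₁, inter_singleton_of_notMem hb₂, card_empty] at hsd
    omega

theorem exists_injOn_adj_of_hall (ha : a₁ ≠ a₂) (hb : b₁ ≠ b₂) (h₁ : G.Adj a₁ b₁) (h₂ : G.Adj a₂ b₂)
    (hall : ∀ S ⊆ s \ {a₁, a₂}, #S ≤ #(S.biUnion (G.neighborFinset ·) \ {b₁, b₂})) :
    ∃ f : V → V, f a₁ = b₁ ∧ f a₂ = b₂ ∧ (∀ a ∈ s, G.Adj a (f a)) ∧ Set.InjOn f s := by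
  obtain ⟨m, hm, hmN⟩ := (all_card_le_biUnion_card_iff_exists_injective
    fun a : ↥(s \ {a₁, a₂}) => G.neighborFinset a \ {b₁, b₂}).mp fun S => by
      convert hall (S.map (Function.Embedding.subtype _)) (fun x hx => by
        obtain ⟨y, -, rfl⟩ := mem_map.mp hx; exact y.2) using 2
      · exact (card_map _).symm
      · ext
        simp only [mem_biUnion, mem_sdiff, mem_map, Function.Embedding.coe_subtype]
        grind
  have hmb : ∀ x, m x ≠ b₁ ∧ m x ≠ b₂ := fun x => by simpa using (mem_sdiff.mp (hmN x)).2
  have hcases : ∀ a ∈ s, a ∈ s \ {a₁, a₂} ∨ a = a₁ ∨ a = a₂ := fun a ha => by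
    by_cases h : a ∈ s \ {a₁, a₂}
    · exact Or.inl h
    · simp only [mem_sdiff, ha, mem_insert, mem_singleton, true_and, not_not] at h
      exact Or.inr h
  let f : V → V := fun v => if h : v ∈ s \ {a₁, a₂} then m ⟨v, h⟩ else if v = a₁ then b₁ else b₂
  have hf : ∀ {a} (h : a ∈ s \ {a₁, a₂}), f a = m ⟨a, h⟩ := fun h => dif_pos h
  have hf₁ : f a₁ = b₁ := by simp [f]
  have hf₂ : f a₂ = b₂ := by simp [f, ha.symm]
  refine ⟨f, hf₁, hf₂, fun a ha => ?_, fun a ha a' ha' h => ?_⟩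
  · rcases hcases a ha with h | rfl | rfl
    · exact hf h ▸ (mem_neighborFinset _ _ _).mp (mem_sdiff.mp (hmN _)).1
    · exact hf₁ ▸ h₁
    · exact hf₂ ▸ h₂
  · rcases hcases a ha with h₀ | rfl | rfl <;> rcases hcases a' ha' with h₀' | rfl | rfl
    · exact congrArg Subtype.val (hm ((hf h₀).symm.trans (h.trans (hf h₀'))))
    all_goals grind

end SimpleGraph

/-- A cubic bipartite graph has a perfect matching through any two edges
that do not lie together in a 3-edge-cut. -/
theorem stmt6 [Fintype V] (G : SimpleGraph V) (hcubic : CubicGraph G)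
    (hbip : G.Colorable 2)
    (e f : Sym2 V) (he : e ∈ G.edgeSet) (hf : f ∈ G.edgeSet)
    (hcut : ∀ X, IsEdgeCut G X → X.ncard = 3 → ¬ (e ∈ X ∧ f ∈ X)) :
    ∃ M, IsPM G M ∧ e ∈ M ∧ f ∈ M := by
  have hG := hcubic.isRegularOfDegree
  obtain ⟨s, t, hst, hcover⟩ := IsBipartite.exists_finset_isBipartiteWith hbip fun v =>
    (G.degree_pos_iff_exists_adj v).mp (by rw [hG.degree_eq]; norm_num)
  obtain ⟨a₁, b₁, h₁, ha₁, rfl⟩ := hst.exists_eq_mk_of_mem_edgeSet he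
  obtain ⟨a₂, b₂, h₂, ha₂, rfl⟩ := hst.exists_eq_mk_of_mem_edgeSet hf
  have hdisj : ∀ v, v ∈ s(a₁, b₁) → v ∉ s(a₂, b₂) := fun v hv₁ hv₂ =>
    let ⟨X, hX, hX3, hmem⟩ := hG.exists_isEdgeCut_of_mem_of_mem he hf hv₁ hv₂
    hcut X hX hX3 hmem
  have ha : a₁ ≠ a₂ := fun h => hdisj a₁ (Sym2.mem_mk_left _ _) (h ▸ Sym2.mem_mk_left _ _)
  have hb : b₁ ≠ b₂ := fun h => hdisj b₁ (Sym2.mem_mk_right _ _) (h ▸ Sym2.mem_mk_right _ _)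
  obtain ⟨g, hg₁, hg₂, hadj, hinj⟩ := exists_injOn_adj_of_hall ha hb h₁ h₂ fun S hS =>
    card_le_card_biUnion_neighborFinset_sdiff hG hst ha₁ ha₂ hb h₁ h₂ hcut hS
  exact ⟨_, isPM_image_of_injOn hst hcover (hst.card_eq_of_isRegularOfDegree hG (by norm_num))
    hadj hinj, ⟨a₁, ha₁, congrArg _ hg₁⟩, ⟨a₂, ha₂, congrArg _ hg₂⟩⟩
end

section
/- Let (G, σ) be a flow-admissible signed cubic graph with exactly two negative edges. If G is bipartite, then F(G, σ) ≤ 4, i.e., (G, σ) admits a nowhere-zero 4-flow. -/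
open Finset SimpleGraph

attribute [local instance] Classical.propDecidable

variable {V : Type}

/-- Context holding all data extracted from the hypotheses of stmt8. -/
structure Ctx (V : Type) [Fintype V] where
  G : SimpleGraph V
  σ : Sym2 V → ℤ
  col : V → Fin 2
  hcol : ∀ {a b : V}, G.Adj a b → col a ≠ col b
  u1 : V
  b1 : V
  u2 : V
  b2 : V
  adj1 : G.Adj u1 b1
  adj2 : G.Adj u2 b2
  col_u1 : col u1 = 0
  col_b1 : col b1 = 1
  col_u2 : col u2 = 0
  col_b2 : col b2 = 1
  e_ne : s(u1,b1) ≠ s(u2,b2)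
  neg1 : σ s(u1,b1) = -1
  neg2 : σ s(u2,b2) = -1
  pos : ∀ e ∈ G.edgeSet, e ≠ s(u1,b1) → e ≠ s(u2,b2) → σ e = 1
  cubic : ∀ v : V, (G.neighborFinset v).card = 3
  τ0 : V → Sym2 V → ℤ
  φ0 : Sym2 V → ℤ
  flow0 : IsFlow G σ τ0 φ0
  nz0 : ∀ e ∈ G.edgeSet, φ0 e ≠ 0

namespace Ctx

variable {V : Type} [Fintype V] (c : Ctx V)

/-- The summand of Kirchhoff's law. -/
noncomputable def t (v w : V) : ℤ := c.τ0 v s(v,w) * c.φ0 s(v,w)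

lemma kirch (v : V) : (∑ w : V, if c.G.Adj v w then c.t v w else 0) = 0 := c.flow0.2 v

lemma tau_pm (v : V) (e : Sym2 V) : c.τ0 v e = 1 ∨ c.τ0 v e = -1 := c.flow0.1.1 v e

lemma tau_rel {a b : V} (h : c.G.Adj a b) :
    c.τ0 a s(a,b) * c.τ0 b s(a,b) = - c.σ s(a,b) := c.flow0.1.2 a b h

lemma t_comm_neg {a b : V} (h : c.G.Adj a b) (hneg : c.σ s(a,b) = -1) :
    c.t a b = c.t b a := by
  have hr := c.tau_rel h
  rw [hneg] at hr
  have h1 := c.tau_pm a s(a,b)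
  have h2 := c.tau_pm b s(a,b)
  have heq : c.τ0 a s(a,b) = c.τ0 b s(a,b) := by
    rcases h1 with h1|h1 <;> rcases h2 with h2|h2 <;> rw [h1,h2] at hr ⊢ <;> omega
  unfold Ctx.t
  rw [Sym2.eq_swap (a := b) (b := a), heq]

lemma t_add_pos {a b : V} (h : c.G.Adj a b) (hpos : c.σ s(a,b) = 1) :
    c.t a b + c.t b a = 0 := by
  have hr := c.tau_rel h
  rw [hpos] at hr
  have h1 := c.tau_pm a s(a,b)
  have h2 := c.tau_pm b s(a,b)
  have heq : c.τ0 a s(a,b) = - c.τ0 b s(a,b) := by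
    rcases h1 with h1|h1 <;> rcases h2 with h2|h2 <;> rw [h1,h2] at hr ⊢ <;> omega
  unfold Ctx.t
  rw [Sym2.eq_swap (a := b) (b := a), heq]; ring

lemma t_ne_zero {a b : V} (h : c.G.Adj a b) : c.t a b ≠ 0 := by
  have h1 := c.tau_pm a s(a,b)
  have h2 := c.nz0 s(a,b) ((c.G).mem_edgeSet.2 h)
  unfold Ctx.t
  rcases h1 with h1|h1 <;> rw [h1] <;> simpa using h2

lemma ne_ub1 : c.u1 ≠ c.b1 := fun h => (c.hcol c.adj1) (by rw [h])
lemma ne_ub2 : c.u2 ≠ c.b2 := fun h => (c.hcol c.adj2) (by rw [h])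
lemma ne_u1b2 : c.u1 ≠ c.b2 := fun h => by
  have := c.col_u1; rw [h, c.col_b2] at this; exact absurd this (by decide)
lemma ne_u2b1 : c.u2 ≠ c.b1 := fun h => by
  have := c.col_u2; rw [h, c.col_b1] at this; exact absurd this (by decide)

/-- The "pair" value of t along an edge. -/
lemma t_pair {a b : V} (h : c.G.Adj a b) :
    c.t a b + c.t b a =
      (if s(a,b) = s(c.u1,c.b1) then 2 * c.t c.u1 c.b1 else 0) +
      (if s(a,b) = s(c.u2,c.b2) then 2 * c.t c.u2 c.b2 else 0) := by
  by_cases h1 : s(a,b) = s(c.u1,c.b1)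
  · have hne2 : s(a,b) ≠ s(c.u2,c.b2) := by rw [h1]; exact c.e_ne
    rw [if_pos h1, if_neg hne2, add_zero]
    have hneg : c.σ s(a,b) = -1 := by rw [h1]; exact c.neg1
    have hcomm := c.t_comm_neg h hneg
    -- (a,b) = (u1,b1) or (b1,u1)
    rcases Sym2.eq_iff.1 h1 with ⟨ha,hb⟩|⟨ha,hb⟩
    · subst ha; subst hb; omega
    · subst ha; subst hb; omega
  · by_cases h2 : s(a,b) = s(c.u2,c.b2)
    · rw [if_neg h1, if_pos h2, zero_add]
      have hneg : c.σ s(a,b) = -1 := by rw [h2]; exact c.neg2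
      have hcomm := c.t_comm_neg h hneg
      rcases Sym2.eq_iff.1 h2 with ⟨ha,hb⟩|⟨ha,hb⟩
      · subst ha; subst hb; omega
      · subst ha; subst hb; omega
    · rw [if_neg h1, if_neg h2, add_zero]
      exact c.t_add_pos h (c.pos _ ((c.G).mem_edgeSet.2 h) h1 h2)

end Ctx
namespace Ctx
variable {V : Type} [Fintype V] (c : Ctx V)

lemma sum_pair_ind (S : Finset V) (a b : V) (X : ℤ) :
    (∑ v ∈ S, ∑ w ∈ S, if v = a ∧ w = b then X else 0) = if a ∈ S ∧ b ∈ S then X else 0 := by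
  have h1 : ∀ v, (∑ w ∈ S, if v = a ∧ w = b then X else 0)
      = if v = a then (if b ∈ S then X else 0) else 0 := by
    intro v
    by_cases hv : v = a
    · subst hv
      simp only [true_and, if_pos rfl]
      exact Finset.sum_ite_eq' S b (fun _ => X)
    · simp [hv]
  rw [Finset.sum_congr rfl (fun v _ => h1 v)]
  rw [Finset.sum_ite_eq' S a (fun _ => if b ∈ S then X else 0)]
  by_cases ha : a ∈ S <;> by_cases hb : b ∈ S <;> simp [ha, hb]

/-- Kirchhoff's law summed over a vertex set `S`. -/
lemma cutsum (S : Finset V) :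
    (∑ v ∈ S, ∑ w ∈ Sᶜ, if c.G.Adj v w then c.t v w else 0)
    + ((if c.u1 ∈ S ∧ c.b1 ∈ S then 2 * c.t c.u1 c.b1 else 0)
       + (if c.u2 ∈ S ∧ c.b2 ∈ S then 2 * c.t c.u2 c.b2 else 0)) = 0 := by
  have hsplit : ∀ v : V, (∑ w ∈ S, if c.G.Adj v w then c.t v w else 0)
      + (∑ w ∈ Sᶜ, if c.G.Adj v w then c.t v w else 0) = 0 := by
    intro v
    rw [Finset.sum_add_sum_compl]
    exact c.kirch v
  have htot : (∑ v ∈ S, ∑ w ∈ S, if c.G.Adj v w then c.t v w else 0)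
      + (∑ v ∈ S, ∑ w ∈ Sᶜ, if c.G.Adj v w then c.t v w else 0) = 0 := by
    rw [← Finset.sum_add_distrib]
    exact Finset.sum_eq_zero (fun v _ => hsplit v)
  -- evaluate the inner double sum
  set D := (∑ v ∈ S, ∑ w ∈ S, if c.G.Adj v w then c.t v w else 0) with hD
  have hcomm : D = (∑ v ∈ S, ∑ w ∈ S, if c.G.Adj v w then c.t w v else 0) := by
    rw [hD, Finset.sum_comm]
    refine Finset.sum_congr rfl (fun v _ => Finset.sum_congr rfl (fun w _ => ?_))
    rw [SimpleGraph.adj_comm]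
  have h2D' : (∑ v ∈ S, ∑ w ∈ S, if c.G.Adj v w then c.t w v else 0)
      + (∑ v ∈ S, ∑ w ∈ S, if c.G.Adj v w then c.t v w else 0) = (∑ v ∈ S, ∑ w ∈ S,
      ((if v = c.u1 ∧ w = c.b1 then 2 * c.t c.u1 c.b1 else 0)
        + (if v = c.b1 ∧ w = c.u1 then 2 * c.t c.u1 c.b1 else 0)
        + ((if v = c.u2 ∧ w = c.b2 then 2 * c.t c.u2 c.b2 else 0)
        + (if v = c.b2 ∧ w = c.u2 then 2 * c.t c.u2 c.b2 else 0)))) := by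
    rw [← Finset.sum_add_distrib]
    refine Finset.sum_congr rfl (fun v _ => ?_)
    rw [← Finset.sum_add_distrib]
    refine Finset.sum_congr rfl (fun w _ => ?_)
    by_cases hadj : c.G.Adj v w
    · rw [if_pos hadj, if_pos hadj]
      have hp := c.t_pair hadj
      rw [add_comm (c.t v w)] at hp
      rw [hp]
      by_cases h1 : s(v,w) = s(c.u1,c.b1)
      · have hne2 : s(v,w) ≠ s(c.u2,c.b2) := by rw [h1]; exact c.e_ne
        rw [if_pos h1, if_neg hne2, add_zero]
        rcases Sym2.eq_iff.1 h1 with ⟨ha,hb⟩|⟨ha,hb⟩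
        · subst ha; subst hb
          rw [if_pos ⟨rfl, rfl⟩, if_neg, if_neg, if_neg]
          · ring
          · rintro ⟨h,-⟩; exact c.ne_u1b2 h
          · rintro ⟨h,h'⟩; exact c.e_ne (by rw [h, h'])
          · rintro ⟨h,-⟩; exact c.ne_ub1 h
        · subst ha; subst hb
          rw [if_neg, if_pos ⟨rfl, rfl⟩, if_neg, if_neg]
          · ring
          · rintro ⟨h,h'⟩; exact c.e_ne (by rw [h, h'])
          · rintro ⟨h,-⟩; exact c.ne_u2b1 h.symm
          · rintro ⟨h,-⟩; exact c.ne_ub1 h.symm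
      · by_cases h2 : s(v,w) = s(c.u2,c.b2)
        · rw [if_neg h1, if_pos h2, zero_add]
          rcases Sym2.eq_iff.1 h2 with ⟨ha,hb⟩|⟨ha,hb⟩
          · subst ha; subst hb
            rw [if_neg, if_neg, if_pos ⟨rfl, rfl⟩, if_neg]
            · ring
            · rintro ⟨h,-⟩; exact c.ne_ub2 h
            · rintro ⟨h,-⟩; exact c.ne_u2b1 h
            · rintro ⟨h,h'⟩; exact c.e_ne (by rw [h, h'])
          · subst ha; subst hb
            rw [if_neg, if_neg, if_neg, if_pos ⟨rfl, rfl⟩]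
            · ring
            · rintro ⟨h,-⟩; exact c.ne_ub2 h.symm
            · rintro ⟨h,h'⟩; exact c.e_ne (by rw [h, h'])
            · rintro ⟨h,-⟩; exact c.ne_u1b2 h.symm
        · rw [if_neg h1, if_neg h2, if_neg, if_neg, if_neg, if_neg]
          · simp
          · rintro ⟨ha,hb⟩; subst ha; subst hb; exact h2 Sym2.eq_swap
          · rintro ⟨ha,hb⟩; subst ha; subst hb; exact h2 rfl
          · rintro ⟨ha,hb⟩; subst ha; subst hb; exact h1 Sym2.eq_swap
          · rintro ⟨ha,hb⟩; subst ha; subst hb; exact h1 rfl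
    · rw [if_neg hadj, if_neg hadj, if_neg, if_neg, if_neg, if_neg]
      · simp
      · rintro ⟨ha,hb⟩; subst ha; subst hb
        exact hadj ((c.G).adj_symm c.adj2)
      · rintro ⟨ha,hb⟩; subst ha; subst hb; exact hadj c.adj2
      · rintro ⟨ha,hb⟩; subst ha; subst hb
        exact hadj ((c.G).adj_symm c.adj1)
      · rintro ⟨ha,hb⟩; subst ha; subst hb; exact hadj c.adj1
  -- evaluate RHS of h2D
  have heval : (∑ v ∈ S, ∑ w ∈ S,
      ((if v = c.u1 ∧ w = c.b1 then 2 * c.t c.u1 c.b1 else 0)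
        + (if v = c.b1 ∧ w = c.u1 then 2 * c.t c.u1 c.b1 else 0)
        + ((if v = c.u2 ∧ w = c.b2 then 2 * c.t c.u2 c.b2 else 0)
        + (if v = c.b2 ∧ w = c.u2 then 2 * c.t c.u2 c.b2 else 0))))
      = 2 * ((if c.u1 ∈ S ∧ c.b1 ∈ S then 2 * c.t c.u1 c.b1 else 0)
       + (if c.u2 ∈ S ∧ c.b2 ∈ S then 2 * c.t c.u2 c.b2 else 0)) := by
    simp only [Finset.sum_add_distrib]
    rw [sum_pair_ind S c.u1 c.b1, sum_pair_ind S c.b1 c.u1,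
        sum_pair_ind S c.u2 c.b2, sum_pair_ind S c.b2 c.u2]
    have hiff1 : (c.u1 ∈ S ∧ c.b1 ∈ S) ↔ (c.b1 ∈ S ∧ c.u1 ∈ S) := and_comm
    have hiff2 : (c.u2 ∈ S ∧ c.b2 ∈ S) ↔ (c.b2 ∈ S ∧ c.u2 ∈ S) := and_comm
    rw [if_congr hiff1.symm rfl rfl, if_congr hiff2.symm rfl rfl]
    ring
  have h2D : D + D = 2 * ((if c.u1 ∈ S ∧ c.b1 ∈ S then 2 * c.t c.u1 c.b1 else 0)
       + (if c.u2 ∈ S ∧ c.b2 ∈ S then 2 * c.t c.u2 c.b2 else 0)) := by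
    rw [← heval, ← h2D', ← hcomm, ← hD]
  omega

end Ctx
namespace Ctx
variable {V : Type} [Fintype V] (c : Ctx V)

set_option linter.unusedSectionVars false

lemma sum_pair_ind2 (S T : Finset V) (a b : V) (X : ℤ) :
    (∑ v ∈ S, ∑ w ∈ T, if v = a ∧ w = b then X else 0) = if a ∈ S ∧ b ∈ T then X else 0 := by
  have h1 : ∀ v, (∑ w ∈ T, if v = a ∧ w = b then X else 0)
      = if v = a then (if b ∈ T then X else 0) else 0 := by
    intro v
    by_cases hv : v = a
    · subst hv
      simp only [true_and, if_pos rfl]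
      exact Finset.sum_ite_eq' T b (fun _ => X)
    · simp [hv]
  rw [Finset.sum_congr rfl (fun v _ => h1 v)]
  rw [Finset.sum_ite_eq' S a (fun _ => if b ∈ T then X else 0)]
  by_cases ha : a ∈ S <;> by_cases hb : b ∈ T <;> simp [ha, hb]

lemma adj_of_eq_e1 {a g : V} (he : s(a,g) = s(c.u1,c.b1)) : c.G.Adj a g := by
  rw [← (c.G).mem_edgeSet, he, (c.G).mem_edgeSet]; exact c.adj1

lemma adj_of_eq_e2 {a g : V} (he : s(a,g) = s(c.u2,c.b2)) : c.G.Adj a g := by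
  rw [← (c.G).mem_edgeSet, he, (c.G).mem_edgeSet]; exact c.adj2

lemma t_e1 {a g : V} (he : s(a,g) = s(c.u1,c.b1)) : c.t a g = c.t c.u1 c.b1 := by
  rcases Sym2.eq_iff.1 he with ⟨ha,hb⟩|⟨ha,hb⟩
  · subst ha; subst hb; rfl
  · subst ha; subst hb; exact (c.t_comm_neg c.adj1 c.neg1).symm

lemma t_e2 {a g : V} (he : s(a,g) = s(c.u2,c.b2)) : c.t a g = c.t c.u2 c.b2 := by
  rcases Sym2.eq_iff.1 he with ⟨ha,hb⟩|⟨ha,hb⟩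
  · subst ha; subst hb; rfl
  · subst ha; subst hb; exact (c.t_comm_neg c.adj2 c.neg2).symm

/-- If `S` is closed under adjacency and contains `u1`, it contains `u2`. -/
lemma closed_reach (S : Finset V) (hcl : ∀ v ∈ S, ∀ w, c.G.Adj v w → w ∈ S)
    (h1 : c.u1 ∈ S) : c.u2 ∈ S := by
  by_contra hu2
  have hb2 : c.b2 ∉ S := fun hb => hu2 (hcl _ hb _ ((c.G).adj_symm c.adj2))
  have hcs := c.cutsum S
  have hzero : (∑ v ∈ S, ∑ w ∈ Sᶜ, if c.G.Adj v w then c.t v w else 0) = 0 := by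
    refine Finset.sum_eq_zero (fun v hv => Finset.sum_eq_zero (fun w hw => ?_))
    rw [if_neg]
    intro hadj
    exact (Finset.mem_compl.1 hw) (hcl _ hv _ hadj)
  rw [hzero, zero_add, if_pos ⟨h1, hcl _ h1 _ c.adj1⟩, if_neg (fun h => hu2 h.1)] at hcs
  have := c.t_ne_zero c.adj1
  omega

/-- Evaluation of the crossing sum when all crossing edges are among three given ones. -/
lemma cross_eval (S : Finset V) (a1 g1 a2 g2 x y : V)
    (hS1 : a1 ∈ S) (hg1 : g1 ∉ S) (hS2 : a2 ∈ S) (hg2 : g2 ∉ S) (hx : x ∈ S) (hy : y ∉ S)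
    (he1 : s(a1,g1) = s(c.u1,c.b1)) (he2 : s(a2,g2) = s(c.u2,c.b2))
    (hne1 : s(x,y) ≠ s(c.u1,c.b1)) (hne2 : s(x,y) ≠ s(c.u2,c.b2)) (hxyadj : c.G.Adj x y)
    (hcr : ∀ v ∈ S, ∀ w, w ∉ S → c.G.Adj v w →
      s(v,w) = s(c.u1,c.b1) ∨ s(v,w) = s(c.u2,c.b2) ∨ s(v,w) = s(x,y)) :
    (∑ v ∈ S, ∑ w ∈ Sᶜ, if c.G.Adj v w then c.t v w else 0)
      = c.t a1 g1 + c.t a2 g2 + c.t x y := by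
  have hadj1 : c.G.Adj a1 g1 := c.adj_of_eq_e1 he1
  have hadj2 : c.G.Adj a2 g2 := c.adj_of_eq_e2 he2
  have hpoint : ∀ v ∈ S, ∀ w ∈ Sᶜ, (if c.G.Adj v w then c.t v w else 0)
      = (if v = a1 ∧ w = g1 then c.t a1 g1 else 0)
        + (if v = a2 ∧ w = g2 then c.t a2 g2 else 0)
        + (if v = x ∧ w = y then c.t x y else 0) := by
    intro v hv w hw
    have hw' : w ∉ S := Finset.mem_compl.1 hw
    by_cases hadj : c.G.Adj v w
    · rw [if_pos hadj]
      rcases hcr v hv w hw' hadj with h|h|h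
      · rw [← he1] at h
        rcases Sym2.eq_iff.1 h with ⟨ha,hb⟩|⟨ha,hb⟩
        · rw [if_pos ⟨ha, hb⟩, if_neg, if_neg]
          · rw [ha, hb]; ring
          · rintro ⟨hc,hd⟩
            apply hne1; rw [← hc, ← hd, h, he1]
          · rintro ⟨hc,hd⟩
            apply c.e_ne; rw [← he1, ← h, hc, hd, he2]
        · rw [ha] at hv; exact absurd hv hg1
      · rw [← he2] at h
        rcases Sym2.eq_iff.1 h with ⟨ha,hb⟩|⟨ha,hb⟩
        · rw [if_neg, if_pos ⟨ha, hb⟩, if_neg]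
          · rw [ha, hb]; ring
          · rintro ⟨hc,hd⟩
            apply hne2; rw [← hc, ← hd, h, he2]
          · rintro ⟨hc,hd⟩
            apply c.e_ne; rw [← he2, ← h, hc, hd, he1]
        · rw [ha] at hv; exact absurd hv hg2
      · rcases Sym2.eq_iff.1 h with ⟨ha,hb⟩|⟨ha,hb⟩
        · rw [if_neg, if_neg, if_pos ⟨ha, hb⟩]
          · rw [ha, hb]; ring
          · rintro ⟨hc,hd⟩
            apply hne2; rw [← h, hc, hd, he2]
          · rintro ⟨hc,hd⟩
            apply hne1; rw [← h, hc, hd, he1]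
        · rw [ha] at hv; exact absurd hv hy
    · rw [if_neg hadj, if_neg, if_neg, if_neg]
      · ring
      · rintro ⟨ha,hb⟩; rw [ha, hb] at hadj; exact hadj hxyadj
      · rintro ⟨ha,hb⟩; rw [ha, hb] at hadj; exact hadj hadj2
      · rintro ⟨ha,hb⟩; rw [ha, hb] at hadj; exact hadj hadj1
  rw [Finset.sum_congr rfl (fun v hv => Finset.sum_congr rfl (fun w hw => hpoint v hv w hw))]
  simp only [Finset.sum_add_distrib]
  rw [sum_pair_ind2 S Sᶜ a1 g1, sum_pair_ind2 S Sᶜ a2 g2, sum_pair_ind2 S Sᶜ x y]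
  rw [if_pos ⟨hS1, Finset.mem_compl.2 hg1⟩, if_pos ⟨hS2, Finset.mem_compl.2 hg2⟩,
      if_pos ⟨hx, Finset.mem_compl.2 hy⟩]

/-- There is no cut of size `≤ 3` crossed by both negative edges. -/
lemma no_small_cut (S : Finset V) (a1 g1 a2 g2 x y : V)
    (hS1 : a1 ∈ S) (hg1 : g1 ∉ S) (hS2 : a2 ∈ S) (hg2 : g2 ∉ S) (hx : x ∈ S) (hy : y ∉ S)
    (he1 : s(a1,g1) = s(c.u1,c.b1)) (he2 : s(a2,g2) = s(c.u2,c.b2))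
    (hxyadj : c.G.Adj x y)
    (hne1 : s(x,y) ≠ s(c.u1,c.b1)) (hne2 : s(x,y) ≠ s(c.u2,c.b2))
    (hcr : ∀ v ∈ S, ∀ w, w ∉ S → c.G.Adj v w →
      s(v,w) = s(c.u1,c.b1) ∨ s(v,w) = s(c.u2,c.b2) ∨ s(v,w) = s(x,y)) :
    False := by
  have hcs1 := c.cutsum S
  have hcs2 := c.cutsum Sᶜ
  have hx' : x ∉ Sᶜ := fun h => (Finset.mem_compl.1 h) hx
  have hy' : y ∈ Sᶜ := Finset.mem_compl.2 hy
  have hmem1 : ¬ (c.u1 ∈ S ∧ c.b1 ∈ S) := by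
    rcases Sym2.eq_iff.1 he1 with ⟨ha,hb⟩|⟨ha,hb⟩
    · rintro ⟨-,h⟩; exact hg1 (hb ▸ h)
    · rintro ⟨h,-⟩; exact hg1 (hb ▸ h)
  have hmem2 : ¬ (c.u2 ∈ S ∧ c.b2 ∈ S) := by
    rcases Sym2.eq_iff.1 he2 with ⟨ha,hb⟩|⟨ha,hb⟩
    · rintro ⟨-,h⟩; exact hg2 (hb ▸ h)
    · rintro ⟨h,-⟩; exact hg2 (hb ▸ h)
  have hmem1' : ¬ (c.u1 ∈ Sᶜ ∧ c.b1 ∈ Sᶜ) := by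
    rcases Sym2.eq_iff.1 he1 with ⟨ha,hb⟩|⟨ha,hb⟩
    · rintro ⟨h,-⟩; exact (Finset.mem_compl.1 h) (ha ▸ hS1)
    · rintro ⟨-,h⟩; exact (Finset.mem_compl.1 h) (ha ▸ hS1)
  have hmem2' : ¬ (c.u2 ∈ Sᶜ ∧ c.b2 ∈ Sᶜ) := by
    rcases Sym2.eq_iff.1 he2 with ⟨ha,hb⟩|⟨ha,hb⟩
    · rintro ⟨h,-⟩; exact (Finset.mem_compl.1 h) (ha ▸ hS2)
    · rintro ⟨-,h⟩; exact (Finset.mem_compl.1 h) (ha ▸ hS2)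
  rw [c.cross_eval S a1 g1 a2 g2 x y hS1 hg1 hS2 hg2 hx hy he1 he2 hne1 hne2 hxyadj hcr,
      if_neg hmem1, if_neg hmem2] at hcs1
  have hcr' : ∀ v ∈ Sᶜ, ∀ w, w ∉ Sᶜ → c.G.Adj v w →
      s(v,w) = s(c.u1,c.b1) ∨ s(v,w) = s(c.u2,c.b2) ∨ s(v,w) = s(y,x) := by
    intro v hv w hw hadj
    have hw' : w ∈ S := by
      by_contra h; exact hw (Finset.mem_compl.2 h)
    have := hcr w hw' v (Finset.mem_compl.1 hv) ((c.G).adj_symm hadj)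
    rw [Sym2.eq_swap (a := w) (b := v)] at this
    rcases this with h|h|h
    · exact Or.inl h
    · exact Or.inr (Or.inl h)
    · exact Or.inr (Or.inr (by rw [h, Sym2.eq_swap]))
  have heval2 := c.cross_eval Sᶜ g1 a1 g2 a2 y x
    (Finset.mem_compl.2 hg1) (fun h => (Finset.mem_compl.1 h) hS1)
    (Finset.mem_compl.2 hg2) (fun h => (Finset.mem_compl.1 h) hS2)
    hy' (fun h => (Finset.mem_compl.1 h) hx)
    (by rw [Sym2.eq_swap]; exact he1) (by rw [Sym2.eq_swap]; exact he2)
    (by rw [Sym2.eq_swap]; exact hne1) (by rw [Sym2.eq_swap]; exact hne2)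
    ((c.G).adj_symm hxyadj) hcr'
  rw [heval2, if_neg hmem1', if_neg hmem2'] at hcs2
  have h1 : c.t g1 a1 = c.t a1 g1 := by
    rw [c.t_e1 he1, c.t_e1 (by rw [Sym2.eq_swap]; exact he1)]
  have h2 : c.t g2 a2 = c.t a2 g2 := by
    rw [c.t_e2 he2, c.t_e2 (by rw [Sym2.eq_swap]; exact he2)]
  have hpos : c.t x y + c.t y x = 0 :=
    c.t_add_pos hxyadj (c.pos _ ((c.G).mem_edgeSet.2 hxyadj) hne1 hne2)
  have hnz := c.t_ne_zero hxyadj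
  omega

end Ctx
namespace Ctx
variable {V : Type} [Fintype V] (c : Ctx V)

set_option linter.unusedSectionVars false

lemma mem_nbr (v w : V) : w ∈ (c.G).neighborFinset v ↔ c.G.Adj v w :=
  SimpleGraph.mem_neighborFinset c.G v w

lemma third_nbr (v x1 x2 : V) (h1 : c.G.Adj v x1) (h2 : c.G.Adj v x2) (hne : x1 ≠ x2) :
    ∃ y, c.G.Adj v y ∧ y ≠ x1 ∧ y ≠ x2 ∧ (∀ w, c.G.Adj v w → w = x1 ∨ w = x2 ∨ w = y) := by
  classical
  set T := (((c.G).neighborFinset v).erase x1).erase x2 with hT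
  have hx1 : x1 ∈ (c.G).neighborFinset v := (c.mem_nbr v x1).2 h1
  have hx2 : x2 ∈ ((c.G).neighborFinset v).erase x1 :=
    Finset.mem_erase.2 ⟨hne.symm, (c.mem_nbr v x2).2 h2⟩
  have hcard : T.card = 1 := by
    rw [hT, Finset.card_erase_of_mem hx2, Finset.card_erase_of_mem hx1, c.cubic v]
  obtain ⟨y, hy⟩ := Finset.card_eq_one.1 hcard
  have hyT : y ∈ T := by rw [hy]; exact Finset.mem_singleton_self y
  rw [hT] at hyT
  have hy2 := Finset.mem_erase.1 hyT
  have hy1 := Finset.mem_erase.1 hy2.2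
  refine ⟨y, (c.mem_nbr v y).1 hy1.2, hy1.1, hy2.1, ?_⟩
  intro w hw
  by_cases hw1 : w = x1
  · exact Or.inl hw1
  by_cases hw2 : w = x2
  · exact Or.inr (Or.inl hw2)
  have : w ∈ T := by
    rw [hT]
    exact Finset.mem_erase.2 ⟨hw2, Finset.mem_erase.2 ⟨hw1, (c.mem_nbr v w).2 hw⟩⟩
  rw [hy] at this
  exact Or.inr (Or.inr (Finset.mem_singleton.1 this))

lemma ne_u1u2 : c.u1 ≠ c.u2 := by
  intro h
  by_cases hb : c.b1 = c.b2
  · exact c.e_ne (by rw [h, hb])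
  obtain ⟨y, hy, hyb1, hyb2, hall⟩ := c.third_nbr c.u1 c.b1 c.b2
    c.adj1 (h ▸ c.adj2) hb
  have hyu1 : y ≠ c.u1 := fun hh => (c.G).irrefl (hh ▸ hy)
  refine c.no_small_cut {c.u1} c.u1 c.b1 c.u1 c.b2 c.u1 y
    (Finset.mem_singleton_self _)
    (fun hh => c.ne_ub1 (Finset.mem_singleton.1 hh).symm)
    (Finset.mem_singleton_self _)
    (fun hh => c.ne_u1b2 (Finset.mem_singleton.1 hh).symm)
    (Finset.mem_singleton_self _)
    (fun hh => hyu1 (Finset.mem_singleton.1 hh))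
    rfl (by rw [h]) hy ?_ ?_ ?_
  · intro hh
    rcases Sym2.eq_iff.1 hh with ⟨ha,hbb⟩|⟨ha,hbb⟩
    · exact hyb1 hbb
    · exact c.ne_ub1 ha
  · intro hh
    rcases Sym2.eq_iff.1 hh with ⟨ha,hbb⟩|⟨ha,hbb⟩
    · exact hyb2 hbb
    · exact c.ne_u1b2 ha
  · intro v hv w hw hadj
    rw [Finset.mem_singleton] at hv
    subst hv
    rcases hall w hadj with hh|hh|hh
    · subst hh; exact Or.inl rfl
    · subst hh; exact Or.inr (Or.inl (by rw [h]))
    · subst hh; exact Or.inr (Or.inr rfl)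

lemma ne_b1b2 : c.b1 ≠ c.b2 := by
  intro h
  by_cases hu : c.u1 = c.u2
  · exact c.e_ne (by rw [h, hu])
  obtain ⟨y, hy, hyu1, hyu2, hall⟩ := c.third_nbr c.b1 c.u1 c.u2
    ((c.G).adj_symm c.adj1) (h ▸ ((c.G).adj_symm c.adj2)) hu
  have hyb1 : y ≠ c.b1 := fun hh => (c.G).irrefl (hh ▸ hy)
  refine c.no_small_cut {c.b1} c.b1 c.u1 c.b1 c.u2 c.b1 y
    (Finset.mem_singleton_self _)
    (fun hh => c.ne_ub1 (Finset.mem_singleton.1 hh))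
    (Finset.mem_singleton_self _)
    (fun hh => c.ne_u2b1 (Finset.mem_singleton.1 hh))
    (Finset.mem_singleton_self _)
    (fun hh => hyb1 (Finset.mem_singleton.1 hh))
    Sym2.eq_swap (by rw [h]; exact Sym2.eq_swap) hy ?_ ?_ ?_
  · intro hh
    rcases Sym2.eq_iff.1 hh with ⟨ha,hbb⟩|⟨ha,hbb⟩
    · exact c.ne_ub1 ha.symm
    · exact hyu1 hbb
  · intro hh
    rcases Sym2.eq_iff.1 hh with ⟨ha,hbb⟩|⟨ha,hbb⟩
    · exact c.ne_u2b1 ha.symm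
    · exact hyu2 hbb
  · intro v hv w hw hadj
    rw [Finset.mem_singleton] at hv
    subst hv
    rcases hall w hadj with hh|hh|hh
    · subst hh; exact Or.inl Sym2.eq_swap
    · subst hh; exact Or.inr (Or.inl (by rw [h]; exact Sym2.eq_swap))
    · subst hh; exact Or.inr (Or.inr rfl)

/-- Translation: a symmetric `f` satisfying the modified Kirchhoff laws gives a NZ 4-flow. -/
lemma flow_of_f (f : V → V → ℤ) (hsymm : ∀ v w, f v w = f w v)
    (hbound : ∀ v w, c.G.Adj v w → 1 ≤ |f v w| ∧ |f v w| ≤ 3)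
    (hA : ∀ v, c.col v = 1 → (∑ w : V, if c.G.Adj v w then f v w else 0) = 0)
    (hB : ∀ v, c.col v = 0 → (∑ w : V, if c.G.Adj v w then f v w else 0)
      = (if v = c.u1 then 2 * f c.u1 c.b1 else 0) + (if v = c.u2 then 2 * f c.u2 c.b2 else 0)) :
    ∃ τ φ, IsNZFlow c.G c.σ 4 τ φ := by
  classical
  set φ : Sym2 V → ℤ := Sym2.lift ⟨f, fun a b => hsymm a b⟩ with hφ
  have hφmk : ∀ a b, φ s(a,b) = f a b := fun a b => rfl
  set τ : V → Sym2 V → ℤ :=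
    fun v e => if e = s(c.u1,c.b1) ∨ e = s(c.u2,c.b2) then 1
      else if c.col v = 1 then 1 else -1 with hτ
  have hτpm : ∀ v e, τ v e = 1 ∨ τ v e = -1 := by
    intro v e
    rw [hτ]
    dsimp only
    split
    · exact Or.inl rfl
    · split
      · exact Or.inl rfl
      · exact Or.inr rfl
  refine ⟨τ, φ, ⟨⟨hτpm, ?_⟩, ?_⟩, ?_⟩
  · -- orientation condition
    intro a b hadj
    by_cases he : s(a,b) = s(c.u1,c.b1) ∨ s(a,b) = s(c.u2,c.b2)
    · have hσ : c.σ s(a,b) = -1 := by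
        rcases he with he|he
        · rw [he]; exact c.neg1
        · rw [he]; exact c.neg2
      rw [hτ]; dsimp only
      rw [if_pos he, if_pos he, hσ]; ring
    · have hσ : c.σ s(a,b) = 1 := by
        push_neg at he
        exact c.pos _ ((c.G).mem_edgeSet.2 hadj) he.1 he.2
      have hcols : c.col a ≠ c.col b := c.hcol hadj
      rw [hτ]; dsimp only
      rw [if_neg he, if_neg he, hσ]
      rcases (by omega : (c.col a : ℕ) = 1 ∧ (c.col b : ℕ) ≠ 1 ∨ (c.col a : ℕ) ≠ 1 ∧ (c.col b : ℕ) = 1) with ⟨h1,h2⟩|⟨h1,h2⟩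
      · rw [if_pos (by omega : c.col a = 1), if_neg (by omega : ¬ c.col b = 1)]; ring
      · rw [if_neg (by omega : ¬ c.col a = 1), if_pos (by omega : c.col b = 1)]; ring
  · -- Kirchhoff
    intro v
    by_cases hcv : c.col v = 1
    · conv_rhs => rw [← hA v hcv]
      refine Finset.sum_congr rfl (fun w _ => ?_)
      by_cases hadj : c.G.Adj v w
      · rw [if_pos hadj, if_pos hadj, hφmk]
        rw [hτ]; dsimp only
        by_cases he : s(v,w) = s(c.u1,c.b1) ∨ s(v,w) = s(c.u2,c.b2)
        · rw [if_pos he]; ring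
        · rw [if_neg he, if_pos hcv]; ring
      · rw [if_neg hadj, if_neg hadj]
    · have hcv0 : c.col v = 0 := by omega
      have hpt : ∀ w, (if c.G.Adj v w then τ v s(v,w) * φ s(v,w) else 0)
          = -(if c.G.Adj v w then f v w else 0)
            + ((if v = c.u1 ∧ w = c.b1 then 2 * f c.u1 c.b1 else 0)
              + (if v = c.u2 ∧ w = c.b2 then 2 * f c.u2 c.b2 else 0)) := by
        intro w
        by_cases hadj : c.G.Adj v w
        · rw [if_pos hadj, if_pos hadj, hφmk, hτ]
          dsimp only
          by_cases he : s(v,w) = s(c.u1,c.b1) ∨ s(v,w) = s(c.u2,c.b2)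
          · rw [if_pos he]
            rcases he with he|he
            · rcases Sym2.eq_iff.1 he with ⟨ha,hb⟩|⟨ha,hb⟩
              · rw [if_pos ⟨ha,hb⟩, if_neg, ha, hb]
                · ring
                · rintro ⟨hc,-⟩; exact c.ne_u1u2 (show c.u1 = c.u2 by rw [← ha]; exact hc)
              · exact absurd (ha ▸ c.col_b1) (by rw [hcv0]; decide)
            · rcases Sym2.eq_iff.1 he with ⟨ha,hb⟩|⟨ha,hb⟩
              · rw [if_neg, if_pos ⟨ha,hb⟩, ha, hb]
                · ring
                · rintro ⟨hc,-⟩; exact c.ne_u1u2 (show c.u1 = c.u2 by rw [← hc]; exact ha)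
              · exact absurd (ha ▸ c.col_b2) (by rw [hcv0]; decide)
          · rw [if_neg he, if_neg (by omega : ¬ c.col v = 1), if_neg, if_neg]
            · ring
            · rintro ⟨ha,hb⟩
              exact he (Or.inr (by rw [ha, hb]))
            · rintro ⟨ha,hb⟩
              exact he (Or.inl (by rw [ha, hb]))
        · rw [if_neg hadj, if_neg hadj, if_neg, if_neg]
          · ring
          · rintro ⟨ha,hb⟩; rw [ha, hb] at hadj; exact hadj c.adj2
          · rintro ⟨ha,hb⟩; rw [ha, hb] at hadj; exact hadj c.adj1
      rw [Finset.sum_congr rfl (fun w _ => hpt w)]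
      rw [Finset.sum_add_distrib, Finset.sum_add_distrib, Finset.sum_neg_distrib]
      rw [hB v hcv0]
      have e1sum : (∑ w : V, if v = c.u1 ∧ w = c.b1 then 2 * f c.u1 c.b1 else 0)
          = if v = c.u1 then 2 * f c.u1 c.b1 else 0 := by
        by_cases hv : v = c.u1
        · subst hv; simp
        · simp [hv]
      have e2sum : (∑ w : V, if v = c.u2 ∧ w = c.b2 then 2 * f c.u2 c.b2 else 0)
          = if v = c.u2 then 2 * f c.u2 c.b2 else 0 := by
        by_cases hv : v = c.u2
        · subst hv; simp
        · simp [hv]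
      rw [e1sum, e2sum]
      ring
  · -- nowhere-zero and bounds
    intro e he
    induction e using Sym2.ind with
    | _ a b =>
      have hadj : c.G.Adj a b := (c.G).mem_edgeSet.1 he
      have := hbound a b hadj
      rw [hφmk]
      omega

end Ctx
namespace Ctx
variable {V : Type} [Fintype V] (c : Ctx V)

set_option linter.unusedSectionVars false

/-- Number of edges from `A` to `B` (ordered count). -/
noncomputable def ecount (A B : Finset V) : ℕ :=
  ∑ v ∈ A, ((c.G).neighborFinset v ∩ B).card

lemma ecount_eq_sum (A B : Finset V) :
    c.ecount A B = ∑ v ∈ A, ∑ w ∈ B, if c.G.Adj v w then 1 else 0 := by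
  unfold Ctx.ecount
  refine Finset.sum_congr rfl (fun v _ => ?_)
  have : (c.G).neighborFinset v ∩ B = B.filter (fun w => c.G.Adj v w) := by
    ext w
    simp [Finset.mem_inter, Finset.mem_filter, c.mem_nbr, and_comm]
  rw [this, Finset.card_filter]

lemma ecount_comm (A B : Finset V) : c.ecount A B = c.ecount B A := by
  rw [c.ecount_eq_sum, c.ecount_eq_sum, Finset.sum_comm]
  refine Finset.sum_congr rfl (fun v _ => Finset.sum_congr rfl (fun w _ => ?_))
  rw [SimpleGraph.adj_comm]

lemma col_other0 {v w : V} (h : c.G.Adj v w) (hv : c.col v = 0) : c.col w = 1 := by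
  have := c.hcol h; omega

lemma col_other1 {v w : V} (h : c.G.Adj v w) (hv : c.col v = 1) : c.col w = 0 := by
  have := c.hcol h; omega

/-- The two sides of the bipartition. -/
noncomputable def S0 : Finset V := Finset.univ.filter (fun v => c.col v = 0)
noncomputable def S1 : Finset V := Finset.univ.filter (fun v => c.col v = 1)

lemma mem_S0 {v : V} : v ∈ c.S0 ↔ c.col v = 0 := by simp [Ctx.S0]
lemma mem_S1 {v : V} : v ∈ c.S1 ↔ c.col v = 1 := by simp [Ctx.S1]

lemma nbrs_sub_S1 {v : V} (hv : c.col v = 0) : (c.G).neighborFinset v ⊆ c.S1 := by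
  intro w hw
  exact c.mem_S1.2 (c.col_other0 ((c.mem_nbr v w).1 hw) hv)

lemma nbrs_sub_S0 {v : V} (hv : c.col v = 1) : (c.G).neighborFinset v ⊆ c.S0 := by
  intro w hw
  exact c.mem_S0.2 (c.col_other1 ((c.mem_nbr v w).1 hw) hv)

lemma card_S0_eq_S1 : c.S0.card = c.S1.card := by
  have h1 : c.ecount c.S0 c.S1 = 3 * c.S0.card := by
    unfold Ctx.ecount
    rw [Finset.sum_congr rfl (fun v hv => by
      rw [Finset.inter_eq_left.2 (c.nbrs_sub_S1 (c.mem_S0.1 hv)), c.cubic v])]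
    rw [Finset.sum_const, smul_eq_mul, mul_comm]
  have h2 : c.ecount c.S1 c.S0 = 3 * c.S1.card := by
    unfold Ctx.ecount
    rw [Finset.sum_congr rfl (fun v hv => by
      rw [Finset.inter_eq_left.2 (c.nbrs_sub_S0 (c.mem_S1.1 hv)), c.cubic v])]
    rw [Finset.sum_const, smul_eq_mul, mul_comm]
  have := c.ecount_comm c.S0 c.S1
  omega

/-- A perfect-matching-style pairing between `A` and `B` obtained from Hall's theorem. -/
lemma exists_matching (A B : Finset V) (hcard : A.card = B.card)
    (hdisj : ∀ v ∈ A, v ∉ B)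
    (hall : ∀ s ⊆ A, s.card ≤ (s.biUnion (fun v => (c.G).neighborFinset v ∩ B)).card) :
    ∃ m : V → V, (∀ v ∈ A, c.G.Adj v (m v) ∧ m v ∈ B ∧ m (m v) = v)
      ∧ (∀ v ∈ B, c.G.Adj v (m v) ∧ m v ∈ A ∧ m (m v) = v) := by
  classical
  set t : ↥A → Finset V := fun a => (c.G).neighborFinset a.1 ∩ B with ht
  have hhall : ∀ (s : Finset ↥A), s.card ≤ (s.biUnion t).card := by
    intro s
    have himg : (s.image (fun a : ↥A => a.1)).card = s.card :=
      Finset.card_image_of_injective s Subtype.val_injective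
    have hsub : s.image (fun a : ↥A => a.1) ⊆ A := by
      intro v hv
      obtain ⟨a, _, rfl⟩ := Finset.mem_image.1 hv
      exact a.2
    have hbU : (s.image (fun a : ↥A => a.1)).biUnion
        (fun v => (c.G).neighborFinset v ∩ B) = s.biUnion t := by
      ext w
      simp only [Finset.mem_biUnion, Finset.mem_image]
      constructor
      · rintro ⟨v, ⟨a, ha, rfl⟩, hw⟩; exact ⟨a, ha, hw⟩
      · rintro ⟨a, ha, hw⟩; exact ⟨a.1, ⟨a, ha, rfl⟩, hw⟩
    calc s.card = (s.image (fun a : ↥A => a.1)).card := himg.symm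
      _ ≤ _ := hall _ hsub
      _ = (s.biUnion t).card := by rw [hbU]
  obtain ⟨f, hfinj, hf⟩ := (Finset.all_card_le_biUnion_card_iff_exists_injective t).1 hhall
  have hfB : ∀ a : ↥A, f a ∈ B := fun a => (Finset.mem_inter.1 (hf a)).2
  have hfadj : ∀ a : ↥A, c.G.Adj a.1 (f a) :=
    fun a => (c.mem_nbr _ _).1 (Finset.mem_inter.1 (hf a)).1
  set F : ↥A → ↥B := fun a => ⟨f a, hfB a⟩ with hF
  have hFinj : Function.Injective F := by
    intro a b hab
    exact hfinj (congrArg Subtype.val hab)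
  have hFbij : Function.Bijective F := by
    rw [Fintype.bijective_iff_injective_and_card]
    refine ⟨hFinj, ?_⟩
    rw [Fintype.card_coe, Fintype.card_coe, hcard]
  set e := Equiv.ofBijective F hFbij with he
  set m : V → V := fun v =>
    if hv : v ∈ A then f ⟨v, hv⟩ else if hv : v ∈ B then (e.symm ⟨v, hv⟩).1 else v with hm
  have hmA : ∀ v (hv : v ∈ A), m v = f ⟨v, hv⟩ := by
    intro v hv; rw [hm]; dsimp only; rw [dif_pos hv]
  have hmB : ∀ v (hv : v ∈ B), m v = (e.symm ⟨v, hv⟩).1 := by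
    intro v hv; rw [hm]; dsimp only
    rw [dif_neg (fun h => hdisj v h hv), dif_pos hv]
  have hBnotA : ∀ v ∈ B, v ∉ A := fun v hv h => hdisj v h hv
  refine ⟨m, ?_, ?_⟩
  · intro v hv
    have h1 : m v = f ⟨v, hv⟩ := hmA v hv
    have h2 : m v ∈ B := h1 ▸ hfB ⟨v, hv⟩
    refine ⟨h1 ▸ hfadj ⟨v, hv⟩, h2, ?_⟩
    rw [hmB (m v) h2]
    have : (⟨m v, h2⟩ : ↥B) = e ⟨v, hv⟩ := by
      apply Subtype.ext
      show m v = ((e ⟨v, hv⟩ : ↥B) : V)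
      rw [h1]; rfl
    rw [this, Equiv.symm_apply_apply]
  · intro v hv
    have h1 : m v = (e.symm ⟨v, hv⟩).1 := hmB v hv
    have h2 : m v ∈ A := h1 ▸ (e.symm ⟨v, hv⟩).2
    have h3 : (⟨m v, h2⟩ : ↥A) = e.symm ⟨v, hv⟩ := by
      apply Subtype.ext; exact h1
    have h4 : f ⟨m v, h2⟩ = v := by
      have : F ⟨m v, h2⟩ = ⟨v, hv⟩ := by
        rw [h3, Equiv.ofBijective_apply_symm_apply (f := F)]
      exact congrArg Subtype.val this
    refine ⟨?_, h2, ?_⟩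
    · have := hfadj ⟨m v, h2⟩
      rw [h4] at this
      exact (c.G).adj_symm this
    · rw [hmA (m v) h2, h4]

end Ctx
namespace Ctx
variable {V : Type} [Fintype V] (c : Ctx V)

set_option linter.unusedSectionVars false
set_option maxHeartbeats 1000000

/-- The whole graph has a perfect matching. -/
lemma global_PM : ∃ m : V → V, (∀ v, c.G.Adj v (m v)) ∧ (∀ v, m (m v) = v) := by
  obtain ⟨m, hA, hB⟩ := c.exists_matching c.S0 c.S1 c.card_S0_eq_S1
    (fun v hv hv' => by
      have h0 := c.mem_S0.1 hv
      have h1 := c.mem_S1.1 hv'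
      rw [h0] at h1; exact absurd h1 (by decide))
    (by
      intro s hs
      set T := s.biUnion (fun v => (c.G).neighborFinset v ∩ c.S1) with hT
      have hsub : ∀ v ∈ s, (c.G).neighborFinset v ⊆ T := by
        intro v hv w hw
        rw [hT]
        refine Finset.mem_biUnion.2 ⟨v, hv, Finset.mem_inter.2 ⟨hw, ?_⟩⟩
        exact c.nbrs_sub_S1 (c.mem_S0.1 (hs hv)) hw
      have h1 : c.ecount s T = 3 * s.card := by
        unfold Ctx.ecount
        rw [Finset.sum_congr rfl (fun v hv => by
          rw [Finset.inter_eq_left.2 (hsub v hv), c.cubic v])]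
        rw [Finset.sum_const, smul_eq_mul, mul_comm]
      have h2 : c.ecount T s ≤ 3 * T.card := by
        unfold Ctx.ecount
        calc ∑ v ∈ T, ((c.G).neighborFinset v ∩ s).card
            ≤ ∑ v ∈ T, 3 := Finset.sum_le_sum (fun v _ => by
              calc ((c.G).neighborFinset v ∩ s).card
                  ≤ ((c.G).neighborFinset v).card :=
                    Finset.card_le_card (Finset.inter_subset_left)
                _ = 3 := c.cubic v)
          _ = 3 * T.card := by rw [Finset.sum_const, smul_eq_mul, mul_comm]
      have h3 := c.ecount_comm s T
      omega)
  refine ⟨m, fun v => ?_, fun v => ?_⟩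
  · rcases (by omega : (c.col v : ℕ) = 0 ∨ (c.col v : ℕ) = 1) with h|h
    · exact (hA v (c.mem_S0.2 (by omega))).1
    · exact (hB v (c.mem_S1.2 (by omega))).1
  · rcases (by omega : (c.col v : ℕ) = 0 ∨ (c.col v : ℕ) = 1) with h|h
    · exact (hA v (c.mem_S0.2 (by omega))).2.2
    · exact (hB v (c.mem_S1.2 (by omega))).2.2

/-- Either a 2-cut crossed exactly by the two negative edges exists (switch case),
or there is a perfect matching containing both negative edges. -/
lemma dichotomy :
    (∃ R : Finset V, c.b1 ∈ R ∧ c.u1 ∉ R ∧ c.b2 ∈ R ∧ c.u2 ∉ R ∧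
      (∀ v ∈ R, ∀ w, w ∉ R → c.G.Adj v w →
        s(v,w) = s(c.u1,c.b1) ∨ s(v,w) = s(c.u2,c.b2)))
    ∨ (∃ m : V → V, (∀ v, c.G.Adj v (m v)) ∧ (∀ v, m (m v) = v)
        ∧ m c.u1 = c.b1 ∧ m c.u2 = c.b2) := by
  classical
  by_cases hsw : (∃ R : Finset V, c.b1 ∈ R ∧ c.u1 ∉ R ∧ c.b2 ∈ R ∧ c.u2 ∉ R ∧
      (∀ v ∈ R, ∀ w, w ∉ R → c.G.Adj v w →
        s(v,w) = s(c.u1,c.b1) ∨ s(v,w) = s(c.u2,c.b2)))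
  · exact Or.inl hsw
  right
  set A := (c.S0.erase c.u1).erase c.u2 with hA
  set B := (c.S1.erase c.b1).erase c.b2 with hB
  have hu1S0 : c.u1 ∈ c.S0 := c.mem_S0.2 c.col_u1
  have hu2S0 : c.u2 ∈ c.S0 := c.mem_S0.2 c.col_u2
  have hb1S1 : c.b1 ∈ c.S1 := c.mem_S1.2 c.col_b1
  have hb2S1 : c.b2 ∈ c.S1 := c.mem_S1.2 c.col_b2
  have hAsub : A ⊆ c.S0 := (Finset.erase_subset _ _).trans (Finset.erase_subset _ _)
  have hBsub : B ⊆ c.S1 := (Finset.erase_subset _ _).trans (Finset.erase_subset _ _)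
  have hcardA : A.card = c.S0.card - 2 := by
    rw [hA, Finset.card_erase_of_mem, Finset.card_erase_of_mem hu1S0]
    · omega
    · exact Finset.mem_erase.2 ⟨c.ne_u1u2.symm, hu2S0⟩
  have hcardB : B.card = c.S1.card - 2 := by
    rw [hB, Finset.card_erase_of_mem, Finset.card_erase_of_mem hb1S1]
    · omega
    · exact Finset.mem_erase.2 ⟨c.ne_b1b2.symm, hb2S1⟩
  have hmemA : ∀ v, v ∈ A ↔ (c.col v = 0 ∧ v ≠ c.u1 ∧ v ≠ c.u2) := by
    intro v
    rw [hA, Finset.mem_erase, Finset.mem_erase, c.mem_S0]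
    tauto
  have hmemB : ∀ v, v ∈ B ↔ (c.col v = 1 ∧ v ≠ c.b1 ∧ v ≠ c.b2) := by
    intro v
    rw [hB, Finset.mem_erase, Finset.mem_erase, c.mem_S1]
    tauto
  have hall : ∀ s ⊆ A, s.card ≤ (s.biUnion (fun v => (c.G).neighborFinset v ∩ B)).card := by
    intro s hs
    by_contra hlt
    push_neg at hlt
    set T := s.biUnion (fun v => (c.G).neighborFinset v ∩ B) with hT
    have hTB : T ⊆ B := by
      intro w hw
      obtain ⟨v, _, hv⟩ := Finset.mem_biUnion.1 hw
      exact (Finset.mem_inter.1 hv).2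
    set Bigs := T ∪ {c.b1, c.b2} with hBigs
    set R := s ∪ Bigs with hR
    -- membership facts
    have hb1R : c.b1 ∈ R := by
      rw [hR, hBigs]; simp
    have hb2R : c.b2 ∈ R := by
      rw [hR, hBigs]; simp
    have hcol_Bigs : ∀ v ∈ Bigs, c.col v = 1 := by
      intro v hv
      rw [hBigs] at hv
      rcases Finset.mem_union.1 hv with h|h
      · exact (hmemB _).1 (hTB h) |>.1
      · rcases Finset.mem_insert.1 h with h|h
        · rw [h]; exact c.col_b1
        · rw [Finset.mem_singleton.1 h]; exact c.col_b2
    have hcol_s : ∀ v ∈ s, c.col v = 0 := fun v hv => ((hmemA _).1 (hs hv)).1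
    have hu1R : c.u1 ∉ R := by
      rw [hR]
      intro h
      rcases Finset.mem_union.1 h with h|h
      · exact ((hmemA _).1 (hs h)).2.1 rfl
      · have := hcol_Bigs _ h; rw [c.col_u1] at this; exact absurd this (by decide)
    have hu2R : c.u2 ∉ R := by
      rw [hR]
      intro h
      rcases Finset.mem_union.1 h with h|h
      · exact ((hmemA _).1 (hs h)).2.2 rfl
      · have := hcol_Bigs _ h; rw [c.col_u2] at this; exact absurd this (by decide)
    -- neighbors of s-vertices stay in R
    have hnbr_s : ∀ v ∈ s, (c.G).neighborFinset v ⊆ R := by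
      intro v hv w hw
      have hw1 : c.col w = 1 := c.col_other0 ((c.mem_nbr _ _).1 hw) (hcol_s v hv)
      rw [hR, hBigs]
      by_cases hwb : w = c.b1 ∨ w = c.b2
      · refine Finset.mem_union.2 (Or.inr (Finset.mem_union.2 (Or.inr ?_)))
        rcases hwb with h|h
        · rw [h]; simp
        · rw [h]; simp
      · push_neg at hwb
        refine Finset.mem_union.2 (Or.inr (Finset.mem_union.2 (Or.inl ?_)))
        rw [hT]
        exact Finset.mem_biUnion.2 ⟨v, hv, Finset.mem_inter.2
          ⟨hw, (hmemB _).2 ⟨hw1, hwb.1, hwb.2⟩⟩⟩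
    -- R ∩ S0-part is s
    have hinter : ∀ v ∈ Bigs, (c.G).neighborFinset v ∩ R = (c.G).neighborFinset v ∩ s := by
      intro v hv
      ext w
      simp only [Finset.mem_inter]
      constructor
      · rintro ⟨hw, hwR⟩
        refine ⟨hw, ?_⟩
        have hw0 : c.col w = 0 := c.col_other1 ((c.mem_nbr _ _).1 hw) (hcol_Bigs v hv)
        rw [hR] at hwR
        rcases Finset.mem_union.1 hwR with h|h
        · exact h
        · have := hcol_Bigs _ h; rw [hw0] at this; exact absurd this (by decide)
      · rintro ⟨hw, hws⟩
        exact ⟨hw, by rw [hR]; exact Finset.mem_union.2 (Or.inl hws)⟩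
    have hdisjBigs : Disjoint s Bigs := by
      rw [Finset.disjoint_left]
      intro v hv hv'
      have := hcol_Bigs v hv'
      rw [hcol_s v hv] at this
      exact absurd this (by decide)
    have hb1T : c.b1 ∉ T := fun h => ((hmemB _).1 (hTB h)).2.1 rfl
    have hb2T : c.b2 ∉ T := fun h => ((hmemB _).1 (hTB h)).2.2 rfl
    have hcardBigs : Bigs.card = T.card + 2 := by
      rw [hBigs, Finset.card_union_of_disjoint, Finset.card_insert_of_notMem, Finset.card_singleton]
      · simp [c.ne_b1b2]
      · rw [Finset.disjoint_left]
        intro v hv hv'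
        rcases Finset.mem_insert.1 hv' with h|h
        · exact hb1T (h ▸ hv)
        · exact hb2T ((Finset.mem_singleton.1 h) ▸ hv)
    -- the crossing count
    have hsum_eq : ∀ v ∈ Bigs, ((c.G).neighborFinset v \ R).card
        + ((c.G).neighborFinset v ∩ s).card = 3 := by
      intro v hv
      rw [← hinter v hv, Finset.card_sdiff_add_card_inter, c.cubic v]
    have hecount : c.ecount Bigs s = 3 * s.card := by
      rw [c.ecount_comm]
      unfold Ctx.ecount
      have : ∀ v ∈ s, (c.G).neighborFinset v ∩ Bigs = (c.G).neighborFinset v := by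
        intro v hv
        refine Finset.inter_eq_left.2 ?_
        intro w hw
        have hwR := hnbr_s v hv hw
        rw [hR] at hwR
        rcases Finset.mem_union.1 hwR with h|h
        · have h1 := c.col_other0 ((c.mem_nbr _ _).1 hw) (hcol_s v hv)
          have h2 := hcol_s _ h
          rw [h1] at h2; exact absurd h2 (by decide)
        · exact h
      rw [Finset.sum_congr rfl (fun v hv => by rw [this v hv, c.cubic v])]
      rw [Finset.sum_const, smul_eq_mul, mul_comm]
    have hN : (∑ v ∈ Bigs, ((c.G).neighborFinset v \ R).card) + 3 * s.card
        = 3 * (T.card + 2) := by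
      have := Finset.sum_congr rfl hsum_eq
      rw [Finset.sum_add_distrib] at this
      rw [Finset.sum_const, smul_eq_mul] at this
      have he2 : (∑ v ∈ Bigs, ((c.G).neighborFinset v ∩ s).card) = 3 * s.card := hecount
      rw [← hcardBigs]
      omega
    have hNbound : (∑ v ∈ Bigs, ((c.G).neighborFinset v \ R).card) ≤ 3 := by omega
    have hRsum : (∑ v ∈ R, ((c.G).neighborFinset v \ R).card)
        = (∑ v ∈ Bigs, ((c.G).neighborFinset v \ R).card) := by
      have hsz : (∑ v ∈ s, ((c.G).neighborFinset v \ R).card) = 0 := by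
        refine Finset.sum_eq_zero (fun v hv => ?_)
        rw [Finset.card_eq_zero, Finset.sdiff_eq_empty_iff_subset]
        exact hnbr_s v hv
      calc (∑ v ∈ R, ((c.G).neighborFinset v \ R).card)
          = ∑ v ∈ s ∪ Bigs, ((c.G).neighborFinset v \ R).card :=
            Finset.sum_congr hR (fun _ _ => rfl)
        _ = (∑ v ∈ s, ((c.G).neighborFinset v \ R).card)
            + ∑ v ∈ Bigs, ((c.G).neighborFinset v \ R).card :=
            Finset.sum_union hdisjBigs
        _ = ∑ v ∈ Bigs, ((c.G).neighborFinset v \ R).card := by omega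
    -- the crossing pairs
    set CP := (R ×ˢ Rᶜ).filter (fun p => c.G.Adj p.1 p.2) with hCP
    have hmemCP : ∀ p : V × V, p ∈ CP ↔ (p.1 ∈ R ∧ p.2 ∉ R ∧ c.G.Adj p.1 p.2) := by
      intro p
      rw [hCP, Finset.mem_filter, Finset.mem_product, Finset.mem_compl]
      tauto
    have hCPcard : CP.card ≤ 3 := by
      have hCPeq : CP = R.biUnion
          (fun v => ((c.G).neighborFinset v \ R).image (fun w => (v,w))) := by
        ext p
        rw [hmemCP]
        simp only [Finset.mem_biUnion, Finset.mem_image, Finset.mem_sdiff]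
        constructor
        · rintro ⟨h1, h2, h3⟩
          exact ⟨p.1, h1, p.2, ⟨(c.mem_nbr _ _).2 h3, h2⟩, rfl⟩
        · rintro ⟨v, hv, w, ⟨hw1, hw2⟩, rfl⟩
          exact ⟨hv, hw2, (c.mem_nbr _ _).1 hw1⟩
      rw [hCPeq]
      calc (R.biUnion _).card
          ≤ ∑ v ∈ R, (((c.G).neighborFinset v \ R).image (fun w => (v,w))).card :=
            Finset.card_biUnion_le
        _ ≤ ∑ v ∈ R, ((c.G).neighborFinset v \ R).card :=
            Finset.sum_le_sum (fun v _ => Finset.card_image_le)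
        _ ≤ 3 := by rw [hRsum]; exact hNbound
    have hp1 : ((c.b1, c.u1) : V × V) ∈ CP := (hmemCP _).2 ⟨hb1R, hu1R, (c.G).adj_symm c.adj1⟩
    have hp2 : ((c.b2, c.u2) : V × V) ∈ CP := (hmemCP _).2 ⟨hb2R, hu2R, (c.G).adj_symm c.adj2⟩
    by_cases hp3 : ∃ p ∈ CP, s(p.1, p.2) ≠ s(c.u1,c.b1) ∧ s(p.1, p.2) ≠ s(c.u2,c.b2)
    · obtain ⟨p3, hp3mem, hp3ne1, hp3ne2⟩ := hp3
      have hp3' := (hmemCP _).1 hp3mem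
      refine c.no_small_cut R c.b1 c.u1 c.b2 c.u2 p3.1 p3.2
        hb1R hu1R hb2R hu2R hp3'.1 hp3'.2.1
        Sym2.eq_swap Sym2.eq_swap hp3'.2.2 hp3ne1 hp3ne2 ?_
      intro v hv w hw hadj
      by_contra hcon
      push_neg at hcon
      have hq : ((v,w) : V × V) ∈ CP := (hmemCP _).2 ⟨hv, hw, hadj⟩
      -- four distinct elements of CP
      have hqp1 : (v,w) ≠ (c.b1, c.u1) := by
        intro h
        rw [Prod.mk.injEq] at h
        exact hcon.1 (by rw [h.1, h.2]; exact Sym2.eq_swap)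
      have hqp2 : (v,w) ≠ (c.b2, c.u2) := by
        intro h
        rw [Prod.mk.injEq] at h
        exact hcon.2.1 (by rw [h.1, h.2]; exact Sym2.eq_swap)
      have hqp3 : (v,w) ≠ p3 := by
        intro h
        exact hcon.2.2 (by subst h; rfl)
      have hp31 : p3 ≠ (c.b1, c.u1) := by
        intro h
        exact hp3ne1 (by rw [h]; exact Sym2.eq_swap)
      have hp32 : p3 ≠ (c.b2, c.u2) := by
        intro h
        exact hp3ne2 (by rw [h]; exact Sym2.eq_swap)
      have hp12 : ((c.b1, c.u1) : V × V) ≠ (c.b2, c.u2) := by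
        intro h
        rw [Prod.mk.injEq] at h
        exact c.ne_b1b2 h.1
      have hsub4 : ({(v,w), p3, (c.b1,c.u1), (c.b2,c.u2)} : Finset (V × V)) ⊆ CP := by
        intro q hq'
        rcases Finset.mem_insert.1 hq' with h|h
        · exact h ▸ hq
        rcases Finset.mem_insert.1 h with h|h
        · exact h ▸ hp3mem
        rcases Finset.mem_insert.1 h with h|h
        · exact h ▸ hp1
        · exact (Finset.mem_singleton.1 h) ▸ hp2
      have hcard4 : ({(v,w), p3, (c.b1,c.u1), (c.b2,c.u2)} : Finset (V × V)).card = 4 := by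
        rw [Finset.card_insert_of_notMem, Finset.card_insert_of_notMem,
            Finset.card_insert_of_notMem, Finset.card_singleton]
        · intro h; exact hp12 (Finset.mem_singleton.1 h)
        · intro h
          rcases Finset.mem_insert.1 h with h|h
          · exact hp31 h
          · exact hp32 (Finset.mem_singleton.1 h)
        · intro h
          rcases Finset.mem_insert.1 h with h|h
          · exact hqp3 h
          rcases Finset.mem_insert.1 h with h|h
          · exact hqp1 h
          · exact hqp2 (Finset.mem_singleton.1 h)
      have := Finset.card_le_card hsub4
      rw [hcard4] at this
      omega
    · push_neg at hp3
      refine hsw ⟨R, hb1R, hu1R, hb2R, hu2R, ?_⟩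
      intro v hv w hw hadj
      have := hp3 (v,w) ((hmemCP _).2 ⟨hv, hw, hadj⟩)
      by_cases h1 : s(v,w) = s(c.u1,c.b1)
      · exact Or.inl h1
      · exact Or.inr (this h1)
  obtain ⟨m, hmA, hmB⟩ := c.exists_matching A B (by rw [hcardA, hcardB, c.card_S0_eq_S1])
    (fun v hv hv' => by
      have h0 := ((hmemA _).1 hv).1
      have h1 := ((hmemB _).1 hv').1
      rw [h0] at h1; exact absurd h1 (by decide))
    hall
  -- extend the matching by the two negative edges
  set m' : V → V := fun v =>
    if v = c.u1 then c.b1 else if v = c.b1 then c.u1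
    else if v = c.u2 then c.b2 else if v = c.b2 then c.u2 else m v with hm'
  have hm'u1 : m' c.u1 = c.b1 := by rw [hm']; simp
  have hm'b1 : m' c.b1 = c.u1 := by
    rw [hm']; dsimp only
    rw [if_neg (fun h => c.ne_ub1 h.symm), if_pos rfl]
  have hm'u2 : m' c.u2 = c.b2 := by
    rw [hm']; dsimp only
    rw [if_neg (fun h => c.ne_u1u2 h.symm), if_neg (fun h => c.ne_u2b1 h), if_pos rfl]
  have hm'b2 : m' c.b2 = c.u2 := by
    rw [hm']; dsimp only
    rw [if_neg (fun h => c.ne_u1b2 h.symm), if_neg (fun h => c.ne_b1b2 h.symm),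
        if_neg (fun h => c.ne_ub2 h.symm), if_pos rfl]
  have hother : ∀ v, v ≠ c.u1 → v ≠ c.b1 → v ≠ c.u2 → v ≠ c.b2 → m' v = m v := by
    intro v h1 h2 h3 h4
    rw [hm']; dsimp only
    rw [if_neg h1, if_neg h2, if_neg h3, if_neg h4]
  have hAB : ∀ v, v ≠ c.u1 → v ≠ c.b1 → v ≠ c.u2 → v ≠ c.b2 → (v ∈ A ∨ v ∈ B) := by
    intro v h1 h2 h3 h4
    rcases (by omega : (c.col v : ℕ) = 0 ∨ (c.col v : ℕ) = 1) with h|h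
    · exact Or.inl ((hmemA _).2 ⟨by omega, h1, h3⟩)
    · exact Or.inr ((hmemB _).2 ⟨by omega, h2, h4⟩)
  have hmnotspec : ∀ v, (v ∈ A ∨ v ∈ B) →
      m v ≠ c.u1 ∧ m v ≠ c.b1 ∧ m v ≠ c.u2 ∧ m v ≠ c.b2 := by
    intro v hv
    rcases hv with hv|hv
    · have := (hmA v hv).2.1
      have hB' := (hmemB _).1 this
      refine ⟨?_, hB'.2.1, ?_, hB'.2.2⟩
      · intro h; rw [h, c.col_u1] at hB'; exact absurd hB'.1 (by decide)
      · intro h; rw [h, c.col_u2] at hB'; exact absurd hB'.1 (by decide)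
    · have := (hmB v hv).2.1
      have hA' := (hmemA _).1 this
      refine ⟨hA'.2.1, ?_, hA'.2.2, ?_⟩
      · intro h; rw [h, c.col_b1] at hA'; exact absurd hA'.1 (by decide)
      · intro h; rw [h, c.col_b2] at hA'; exact absurd hA'.1 (by decide)
  refine ⟨m', fun v => ?_, fun v => ?_, hm'u1, hm'u2⟩
  · by_cases h1 : v = c.u1
    · rw [h1, hm'u1]; exact c.adj1
    by_cases h2 : v = c.b1
    · rw [h2, hm'b1]; exact (c.G).adj_symm c.adj1
    by_cases h3 : v = c.u2
    · rw [h3, hm'u2]; exact c.adj2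
    by_cases h4 : v = c.b2
    · rw [h4, hm'b2]; exact (c.G).adj_symm c.adj2
    rw [hother v h1 h2 h3 h4]
    rcases hAB v h1 h2 h3 h4 with h|h
    · exact (hmA v h).1
    · exact (hmB v h).1
  · by_cases h1 : v = c.u1
    · rw [h1, hm'u1, hm'b1]
    by_cases h2 : v = c.b1
    · rw [h2, hm'b1, hm'u1]
    by_cases h3 : v = c.u2
    · rw [h3, hm'u2, hm'b2]
    by_cases h4 : v = c.b2
    · rw [h4, hm'b2, hm'u2]
    rw [hother v h1 h2 h3 h4]
    have hv := hAB v h1 h2 h3 h4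
    obtain ⟨g1, g2, g3, g4⟩ := hmnotspec v hv
    rw [hother (m v) g1 g2 g3 g4]
    rcases hv with h|h
    · exact (hmA v h).2.2
    · exact (hmB v h).2.2

end Ctx
namespace Ctx
variable {V : Type} [Fintype V] (c : Ctx V)

set_option linter.unusedSectionVars false
set_option maxHeartbeats 1000000

lemma sum_nbrs (g : V → V → ℤ) (v : V) :
    (∑ w : V, if c.G.Adj v w then g v w else 0) = ∑ w ∈ (c.G).neighborFinset v, g v w := by
  rw [← Finset.sum_filter]
  refine Finset.sum_congr ?_ (fun _ _ => rfl)
  ext w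
  simp [c.mem_nbr]

/-- In the switch case, a NZ 4-flow exists directly. -/
lemma switch_flow (R : Finset V)
    (hb1 : c.b1 ∈ R) (hu1 : c.u1 ∉ R) (hb2 : c.b2 ∈ R) (hu2 : c.u2 ∉ R)
    (hR : ∀ v ∈ R, ∀ w, w ∉ R → c.G.Adj v w →
      s(v,w) = s(c.u1,c.b1) ∨ s(v,w) = s(c.u2,c.b2)) :
    ∃ τ φ, IsNZFlow c.G c.σ 4 τ φ := by
  classical
  obtain ⟨m, hmadj, hminv⟩ := c.global_PM
  have hmiff : ∀ v w, m v = w ↔ m w = v := by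
    intro v w
    constructor
    · intro h; rw [← h, hminv]
    · intro h; rw [← h, hminv]
  set f : V → V → ℤ := fun v w => if m v = w then -2 else 1 with hf
  have hsymm : ∀ v w, f v w = f w v := by
    intro v w
    rw [hf]; dsimp only
    by_cases h : m v = w
    · rw [if_pos h, if_pos ((hmiff v w).1 h)]
    · rw [if_neg h, if_neg (fun h' => h ((hmiff w v).1 h'))]
  set φ : Sym2 V → ℤ := Sym2.lift ⟨f, hsymm⟩ with hφ
  have hφmk : ∀ a b, φ s(a,b) = f a b := fun a b => rfl
  set τ : V → Sym2 V → ℤ :=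
    fun v _ => (if c.col v = 1 then 1 else -1) * (if v ∈ R then -1 else 1) with hτ
  have hτval : ∀ v e, τ v e = (if c.col v = 1 then 1 else -1) * (if v ∈ R then -1 else 1) :=
    fun v e => rfl
  have hcross : ∀ a b : V, c.G.Adj a b →
      ((s(a,b) = s(c.u1,c.b1) ∨ s(a,b) = s(c.u2,c.b2)) ↔ ((a ∈ R) ↔ (b ∉ R))) := by
    intro a b hadj
    constructor
    · intro h
      rcases h with h|h
      · rcases Sym2.eq_iff.1 h with ⟨ha,hb⟩|⟨ha,hb⟩
        · rw [ha, hb]; simp [hu1, hb1]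
        · rw [ha, hb]; simp [hu1, hb1]
      · rcases Sym2.eq_iff.1 h with ⟨ha,hb⟩|⟨ha,hb⟩
        · rw [ha, hb]; simp [hu2, hb2]
        · rw [ha, hb]; simp [hu2, hb2]
    · intro h
      by_cases ha : a ∈ R
      · exact hR a ha b (h.1 ha) hadj
      · have hb : b ∈ R := by tauto
        have := hR b hb a ha ((c.G).adj_symm hadj)
        rcases this with h'|h'
        · exact Or.inl (by rw [← h']; exact Sym2.eq_swap)
        · exact Or.inr (by rw [← h']; exact Sym2.eq_swap)
  refine ⟨τ, φ, ⟨⟨?_, ?_⟩, ?_⟩, ?_⟩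
  · intro v e
    rw [hτval v e]
    by_cases h1 : c.col v = 1 <;> by_cases h2 : v ∈ R <;> simp [h1, h2]
  · intro a b hadj
    rw [hτval a s(a,b), hτval b s(a,b)]
    have hcol : c.col a ≠ c.col b := c.hcol hadj
    have hcolprod : (if c.col a = 1 then (1:ℤ) else -1) * (if c.col b = 1 then 1 else -1) = -1 := by
      rcases (by omega : (c.col a : ℕ) = 1 ∧ (c.col b : ℕ) ≠ 1
          ∨ (c.col a : ℕ) ≠ 1 ∧ (c.col b : ℕ) = 1) with ⟨g1,g2⟩|⟨g1,g2⟩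
      · rw [if_pos (by omega : c.col a = 1), if_neg (by omega : ¬ c.col b = 1)]; ring
      · rw [if_neg (by omega : ¬ c.col a = 1), if_pos (by omega : c.col b = 1)]; ring
    by_cases hsp : s(a,b) = s(c.u1,c.b1) ∨ s(a,b) = s(c.u2,c.b2)
    · have hmem := (hcross a b hadj).1 hsp
      have hσ : c.σ s(a,b) = -1 := by
        rcases hsp with h|h
        · rw [h]; exact c.neg1
        · rw [h]; exact c.neg2
      rw [hσ]
      by_cases ha : a ∈ R
      · have hb : b ∉ R := hmem.1 ha
        rw [if_pos ha, if_neg hb]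
        rw [show (if c.col a = 1 then (1:ℤ) else -1) * -1 * ((if c.col b = 1 then 1 else -1) * 1)
          = -((if c.col a = 1 then (1:ℤ) else -1) * (if c.col b = 1 then 1 else -1)) from by ring,
          hcolprod]
      · have hb : b ∈ R := by tauto
        rw [if_neg ha, if_pos hb]
        rw [show (if c.col a = 1 then (1:ℤ) else -1) * 1 * ((if c.col b = 1 then 1 else -1) * -1)
          = -((if c.col a = 1 then (1:ℤ) else -1) * (if c.col b = 1 then 1 else -1)) from by ring,
          hcolprod]
    · have hσ : c.σ s(a,b) = 1 := by
        push_neg at hsp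
        exact c.pos _ ((c.G).mem_edgeSet.2 hadj) hsp.1 hsp.2
      rw [hσ]
      have hmem : ¬ ((a ∈ R) ↔ (b ∉ R)) := fun h => hsp ((hcross a b hadj).2 h)
      by_cases ha : a ∈ R
      · have hb : b ∈ R := by tauto
        rw [if_pos ha, if_pos hb]
        rw [show (if c.col a = 1 then (1:ℤ) else -1) * -1 * ((if c.col b = 1 then 1 else -1) * -1)
          = ((if c.col a = 1 then (1:ℤ) else -1) * (if c.col b = 1 then 1 else -1)) from by ring,
          hcolprod]
      · have hb : b ∉ R := by tauto
        rw [if_neg ha, if_neg hb]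
        rw [show (if c.col a = 1 then (1:ℤ) else -1) * 1 * ((if c.col b = 1 then 1 else -1) * 1)
          = ((if c.col a = 1 then (1:ℤ) else -1) * (if c.col b = 1 then 1 else -1)) from by ring,
          hcolprod]
  · intro v
    have hconst : ∀ w, (if c.G.Adj v w then τ v s(v,w) * φ s(v,w) else 0)
        = ((if c.col v = 1 then 1 else -1) * (if v ∈ R then -1 else 1))
          * (if c.G.Adj v w then f v w else 0) := by
      intro w
      by_cases h : c.G.Adj v w
      · rw [if_pos h, if_pos h]; rfl
      · rw [if_neg h, if_neg h, mul_zero]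
    rw [Finset.sum_congr rfl (fun w _ => hconst w), ← Finset.mul_sum]
    have hzero : (∑ w : V, if c.G.Adj v w then f v w else 0) = 0 := by
      rw [c.sum_nbrs f v]
      have hmv : m v ∈ (c.G).neighborFinset v := (c.mem_nbr _ _).2 (hmadj v)
      rw [← Finset.insert_erase hmv, Finset.sum_insert (Finset.notMem_erase _ _)]
      have h1 : f v (m v) = -2 := by rw [hf]; dsimp only; rw [if_pos rfl]
      have h2 : ∀ w ∈ ((c.G).neighborFinset v).erase (m v), f v w = 1 := by
        intro w hw
        rw [hf]; dsimp only
        rw [if_neg (fun h => (Finset.mem_erase.1 hw).1 h.symm)]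
      rw [h1, Finset.sum_congr rfl h2, Finset.sum_const,
          Finset.card_erase_of_mem hmv, c.cubic v]
      norm_num
    rw [hzero, mul_zero]
  · intro e he
    induction e using Sym2.ind with
    | _ a b =>
      have hadj : c.G.Adj a b := (c.G).mem_edgeSet.1 he
      rw [hφmk, hf]
      dsimp only
      by_cases h : m a = b <;> simp [h]
end Ctx
/-- Alternating reachability: states reachable from `x0` or `y0` by alternating walks. -/
inductive AReach {V : Type} (G : SimpleGraph V) (m : V → V) (x0 y0 : V) : V → Prop
  | base1 : AReach G m x0 y0 x0
  | base2 : AReach G m x0 y0 y0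
  | step {x z : V} : AReach G m x0 y0 x → G.Adj x (m z) → m z ≠ m x → AReach G m x0 y0 z

namespace Ctx
variable {V : Type} [Fintype V] (c : Ctx V)

set_option linter.unusedSectionVars false
set_option maxHeartbeats 1000000

/-- The reachable set is closed under reversed arcs (in-degree counting). -/
lemma reach_in (m : V → V) (hmadj : ∀ v, c.G.Adj v (m v)) (hminv : ∀ v, m (m v) = v) :
    ∀ z, AReach c.G m c.u1 c.b1 z → ∀ x, c.G.Adj x (m z) → m z ≠ m x →
      AReach c.G m c.u1 c.b1 x := by
  classical
  have hminj : Function.Injective m := by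
    intro a b h
    rw [← hminv a, h, hminv]
  set A : Finset V := Finset.univ.filter (fun v => AReach c.G m c.u1 c.b1 v) with hA
  have hmemA : ∀ v, v ∈ A ↔ AReach c.G m c.u1 c.b1 v := by
    intro v; rw [hA, Finset.mem_filter]; simp
  set inn : V → Finset V := fun z => ((c.G).neighborFinset (m z)).erase z with hinn
  set out : V → Finset V := fun x => (((c.G).neighborFinset x).erase (m x)).image m with hout
  have hmvnbr : ∀ x, m x ∈ (c.G).neighborFinset x := fun x => (c.mem_nbr _ _).2 (hmadj x)
  have hcard_out : ∀ x, (out x).card = 2 := by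
    intro x
    rw [hout]
    dsimp only
    rw [Finset.card_image_of_injective _ hminj, Finset.card_erase_of_mem (hmvnbr x), c.cubic x]
  have hcard_inn : ∀ z, (inn z).card = 2 := by
    intro z
    rw [hinn]
    dsimp only
    have hz : z ∈ (c.G).neighborFinset (m z) := by
      refine (c.mem_nbr _ _).2 ?_
      have := hmadj z
      exact (c.G).adj_symm this
    rw [Finset.card_erase_of_mem hz, c.cubic (m z)]
  have hmem_out : ∀ x z, z ∈ out x ↔ (c.G.Adj x (m z) ∧ m z ≠ m x) := by
    intro x z
    rw [hout]
    dsimp only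
    rw [Finset.mem_image]
    constructor
    · rintro ⟨w, hw, rfl⟩
      obtain ⟨hw1, hw2⟩ := Finset.mem_erase.1 hw
      rw [hminv]
      exact ⟨(c.mem_nbr _ _).1 hw2, hw1⟩
    · rintro ⟨h1, h2⟩
      refine ⟨m z, Finset.mem_erase.2 ⟨h2, (c.mem_nbr _ _).2 h1⟩, hminv z⟩
  have hmem_inn : ∀ x z, x ∈ inn z ↔ (c.G.Adj x (m z) ∧ m z ≠ m x) := by
    intro x z
    rw [hinn]
    dsimp only
    rw [Finset.mem_erase]
    constructor
    · rintro ⟨h1, h2⟩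
      exact ⟨(c.G).adj_symm ((c.mem_nbr _ _).1 h2), fun h => h1 (hminj h).symm⟩
    · rintro ⟨h1, h2⟩
      exact ⟨fun h => h2 (by rw [h]), (c.mem_nbr _ _).2 ((c.G).adj_symm h1)⟩
  have hclosed : ∀ x ∈ A, out x ⊆ A := by
    intro x hx z hz
    obtain ⟨h1, h2⟩ := (hmem_out x z).1 hz
    exact (hmemA z).2 (AReach.step ((hmemA x).1 hx) h1 h2)
  have key : ∀ z ∈ A, inn z ⊆ A := by
    have h1 : (∑ x ∈ A, ((out x) ∩ A).card) = ∑ x ∈ A, (out x).card :=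
      Finset.sum_congr rfl (fun x hx => by
        rw [Finset.inter_eq_left.2 (hclosed x hx)])
    have h2 : (∑ x ∈ A, ((out x) ∩ A).card) = ∑ z ∈ A, ((inn z) ∩ A).card := by
      have e1 : ∀ x, ((out x) ∩ A).card = ∑ z ∈ A, if z ∈ out x then 1 else 0 := by
        intro x
        rw [show (out x) ∩ A = A.filter (fun z => z ∈ out x) from by
          ext z; simp [Finset.mem_inter, Finset.mem_filter, and_comm]]
        rw [Finset.card_filter]
      have e2 : ∀ z, ((inn z) ∩ A).card = ∑ x ∈ A, if x ∈ inn z then 1 else 0 := by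
        intro z
        rw [show (inn z) ∩ A = A.filter (fun x => x ∈ inn z) from by
          ext x; simp [Finset.mem_inter, Finset.mem_filter, and_comm]]
        rw [Finset.card_filter]
      rw [Finset.sum_congr rfl (fun x _ => e1 x), Finset.sum_congr rfl (fun z _ => e2 z),
        Finset.sum_comm]
      refine Finset.sum_congr rfl (fun z _ => Finset.sum_congr rfl (fun x _ => ?_))
      congr 1
      rw [eq_iff_iff, hmem_out, hmem_inn]
    have h3 : (∑ z ∈ A, ((inn z) ∩ A).card) = ∑ z ∈ A, (inn z).card := by
      rw [← h2, h1]
      refine Finset.sum_congr rfl (fun x _ => ?_)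
      rw [hcard_out, hcard_inn]
    have h4 := (Finset.sum_eq_sum_iff_of_le
      (fun z (_ : z ∈ A) => Finset.card_le_card Finset.inter_subset_left)).1 h3
    intro z hz
    have h5 := h4 z hz
    have h6 : (inn z) ∩ A = inn z :=
      Finset.eq_of_subset_of_card_le Finset.inter_subset_left (by omega)
    intro x hx
    rw [← h6] at hx
    exact (Finset.mem_inter.1 hx).2
  intro z hz x hadj hne
  have hzA : z ∈ A := (hmemA z).2 hz
  have hxinn : x ∈ inn z := (hmem_inn x z).2 ⟨hadj, hne⟩
  exact (hmemA x).1 (key z hzA hxinn)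

/-- One of the two endpoints of `e2` is alternating-reachable. -/
lemma reach_target (m : V → V) (hmadj : ∀ v, c.G.Adj v (m v)) (hminv : ∀ v, m (m v) = v)
    (hm2 : m c.u2 = c.b2) :
    AReach c.G m c.u1 c.b1 c.u2 ∨ AReach c.G m c.u1 c.b1 c.b2 := by
  classical
  set S : Finset V := Finset.univ.filter
    (fun v => AReach c.G m c.u1 c.b1 v ∨ AReach c.G m c.u1 c.b1 (m v)) with hS
  have hmemS : ∀ v, v ∈ S ↔ (AReach c.G m c.u1 c.b1 v ∨ AReach c.G m c.u1 c.b1 (m v)) := by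
    intro v; rw [hS, Finset.mem_filter]; simp
  have hcl : ∀ v ∈ S, ∀ w, c.G.Adj v w → w ∈ S := by
    intro v hv w hadj
    rcases (hmemS v).1 hv with h|h
    · by_cases hw : w = m v
      · refine (hmemS w).2 (Or.inr ?_)
        rw [hw, hminv]
        exact h
      · refine (hmemS w).2 (Or.inr ?_)
        refine AReach.step h ?_ ?_
        · rw [hminv]; exact hadj
        · rw [hminv]
          intro hc
          exact hw hc
    · by_cases hw : w = m v
      · exact (hmemS w).2 (Or.inl (hw ▸ h))
      · refine (hmemS w).2 (Or.inl ?_)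
        refine c.reach_in m hmadj hminv (m v) h w ?_ ?_
        · rw [hminv]; exact (c.G).adj_symm hadj
        · rw [hminv]
          intro hc
          exact hw (by rw [hc, hminv])
  have hu1 : c.u1 ∈ S := (hmemS _).2 (Or.inl AReach.base1)
  have := c.closed_reach S hcl hu1
  rcases (hmemS _).1 this with h|h
  · exact Or.inl h
  · rw [hm2] at h
    exact Or.inr h

end Ctx
namespace Ctx
variable {V : Type} [Fintype V] (c : Ctx V)

set_option linter.unusedSectionVars false
set_option maxHeartbeats 2000000

/-- Main case: a perfect matching through both negative edges gives a NZ 4-flow. -/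
lemma main_flow (m : V → V) (hmadj : ∀ v, c.G.Adj v (m v)) (hminv : ∀ v, m (m v) = v)
    (hm1 : m c.u1 = c.b1) (hm2 : m c.u2 = c.b2) :
    ∃ τ φ, IsNZFlow c.G c.σ 4 τ φ := by
  classical
  have hminj : Function.Injective m := by
    intro a b h; rw [← hminv a, h, hminv]
  have hmb1 : m c.b1 = c.u1 := by rw [← hm1, hminv]
  have hmb2 : m c.b2 = c.u2 := by rw [← hm2, hminv]
  -- a walk exists
  have hwalk : ∀ z, AReach c.G m c.u1 c.b1 z → ∃ (n : ℕ) (seq : ℕ → V),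
      (seq 0 = c.u1 ∨ seq 0 = c.b1) ∧
      (∀ i < n, c.G.Adj (seq i) (m (seq (i+1))) ∧ m (seq (i+1)) ≠ m (seq i)) ∧
      seq n = z := by
    intro z hz
    induction hz with
    | base1 => exact ⟨0, fun _ => c.u1, Or.inl rfl, fun i hi => absurd hi (by omega), rfl⟩
    | base2 => exact ⟨0, fun _ => c.b1, Or.inr rfl, fun i hi => absurd hi (by omega), rfl⟩
    | @step x z hx hadj hne ih =>
      obtain ⟨n, seq, h0, hstep, hlast⟩ := ih
      refine ⟨n+1, fun k => if k ≤ n then seq k else z, ?_, ?_, ?_⟩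
      · simpa using h0
      · intro i hi
        by_cases hin : i < n
        · have h1 : i ≤ n := by omega
          have h2 : i + 1 ≤ n := by omega
          simpa [h1, h2] using hstep i hin
        · have hieq : i = n := by omega
          subst hieq
          have h1 : i ≤ i := le_refl i
          have h2 : ¬ (i + 1 ≤ i) := by omega
          simp only [if_pos h1, if_neg h2]
          rw [hlast]
          exact ⟨hadj, hne⟩
      · have h2 : ¬ (n + 1 ≤ n) := by omega
        simp [h2]
  -- target reachable
  have hPex : ∃ n : ℕ, ∃ seq : ℕ → V,
      (seq 0 = c.u1 ∨ seq 0 = c.b1) ∧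
      (∀ i < n, c.G.Adj (seq i) (m (seq (i+1))) ∧ m (seq (i+1)) ≠ m (seq i)) ∧
      (seq n = c.u2 ∨ seq n = c.b2) := by
    rcases c.reach_target m hmadj hminv hm2 with h|h
    · obtain ⟨n, seq, h0, hs, hl⟩ := hwalk _ h
      exact ⟨n, seq, h0, hs, Or.inl hl⟩
    · obtain ⟨n, seq, h0, hs, hl⟩ := hwalk _ h
      exact ⟨n, seq, h0, hs, Or.inr hl⟩
  set n0 := Nat.find hPex with hn0
  obtain ⟨seq, hs0, harc, hsend⟩ := Nat.find_spec hPex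
  rw [← hn0] at harc hsend
  have hmin : ∀ k, k < n0 → ¬ (∃ seq : ℕ → V,
      (seq 0 = c.u1 ∨ seq 0 = c.b1) ∧
      (∀ i < k, c.G.Adj (seq i) (m (seq (i+1))) ∧ m (seq (i+1)) ≠ m (seq i)) ∧
      (seq k = c.u2 ∨ seq k = c.b2)) := fun k hk => Nat.find_min hPex hk
  -- basic facts about the minimal walk
  have hcol_const : ∀ i, i ≤ n0 → c.col (seq i) = c.col (seq 0) := by
    intro i
    induction i with
    | zero => intro _; rfl
    | succ i ih =>
      intro hi
      have h1 := (harc i (by omega)).1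
      have h2 := c.hcol h1
      have h3 := c.hcol (hmadj (seq (i+1)))
      have h4 := ih (by omega)
      omega
  have hn0pos : 1 ≤ n0 := by
    rcases Nat.eq_zero_or_pos n0 with h|h
    · exfalso
      rw [h] at hsend
      rcases hs0 with h0|h0 <;> rcases hsend with he|he
      · exact c.ne_u1u2 (by rw [← h0]; exact he)
      · exact c.ne_u1b2 (by rw [← h0]; exact he)
      · exact c.ne_u2b1 (by rw [← he]; exact h0)
      · exact c.ne_b1b2 (by rw [← h0]; exact he)
    · exact h
  have hinj : ∀ i j, i ≤ n0 → j ≤ n0 → i < j → seq i ≠ seq j := by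
    intro i j hi hj hij heq
    have hlen : n0 - (j - i) < n0 := by omega
    refine hmin (n0 - (j-i)) hlen ⟨fun k => if k ≤ i then seq k else seq (k + (j-i)), ?_, ?_, ?_⟩
    · simpa using hs0
    · intro k hk
      by_cases h1 : k < i
      · have e1 : k ≤ i := by omega
        have e2 : k + 1 ≤ i := by omega
        simpa [e1, e2] using harc k (by omega)
      · by_cases h2 : k = i
        · subst h2
          have e1 : k ≤ k := le_refl k
          have e2 : ¬ (k + 1 ≤ k) := by omega
          simp only [if_pos e1, if_neg e2]
          have e3 : k + 1 + (j - k) = j + 1 := by omega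
          rw [e3, heq]
          exact harc j (by omega)
        · have e1 : ¬ (k ≤ i) := by omega
          have e2 : ¬ (k + 1 ≤ i) := by omega
          simp only [if_neg e1, if_neg e2]
          have e3 : k + 1 + (j - i) = (k + (j-i)) + 1 := by omega
          rw [e3]
          exact harc (k + (j-i)) (by omega)
    · by_cases h1 : n0 - (j-i) ≤ i
      · have h2 : n0 - (j-i) = i := by omega
        have h3 : j = n0 := by omega
        rw [h2]
        dsimp only
        rw [if_pos (le_refl i), heq, h3]
        exact hsend
      · dsimp only
        have h2 : n0 - (j-i) + (j-i) = n0 := by omega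
        rw [if_neg h1, h2]
        exact hsend
  have hearly : ∀ i, i < n0 → seq i ≠ c.u2 ∧ seq i ≠ c.b2 := by
    intro i hi
    constructor <;> intro heq <;>
      exact hmin i hi ⟨seq, hs0, fun k hk => harc k (by omega), by rw [heq]; tauto⟩
  have hcolm : ∀ i, i ≤ n0 → c.col (m (seq i)) ≠ c.col (seq 0) := by
    intro i hi
    have h1 := c.hcol (hmadj (seq i))
    have h2 := hcol_const i hi
    omega
  -- covering structures
  set uedge : V → V → Prop := fun v w => ∃ i, i < n0 ∧
    ((v = seq i ∧ w = m (seq (i+1))) ∨ (w = seq i ∧ v = m (seq (i+1)))) with huedge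
  set cov : V → Prop := fun v => (∃ i, i < n0 ∧ v = seq i) ∨
    (∃ i, 1 ≤ i ∧ i ≤ n0 ∧ v = m (seq i)) with hcov
  have uedge_symm : ∀ v w, uedge v w ↔ uedge w v := by
    intro v w
    rw [huedge]
    constructor <;> (rintro ⟨i, hi, h|h⟩; exacts [⟨i, hi, Or.inr h⟩, ⟨i, hi, Or.inl h⟩])
  have uedge_F : ∀ v w, uedge v w → c.G.Adj v w ∧ w ≠ m v := by
    intro v w h
    rw [huedge] at h
    obtain ⟨i, hi, h|h⟩ := h
    · obtain ⟨rfl, rfl⟩ := h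
      exact ⟨(harc i hi).1, (harc i hi).2⟩
    · obtain ⟨rfl, rfl⟩ := h
      refine ⟨(c.G).adj_symm (harc i hi).1, ?_⟩
      intro hc
      rw [hminv] at hc
      exact hinj i (i+1) (by omega) (by omega) (by omega) hc
  have uedge_cov : ∀ v w, uedge v w → cov v := by
    intro v w h
    rw [huedge] at h
    rw [hcov]
    obtain ⟨i, hi, h|h⟩ := h
    · exact Or.inl ⟨i, hi, h.1⟩
    · exact Or.inr ⟨i+1, by omega, by omega, h.2⟩
  have cov_unique : ∀ v, cov v → ∃ w, uedge v w ∧ ∀ w', uedge v w' → w' = w := by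
    intro v hv
    rw [hcov] at hv
    rcases hv with ⟨i, hi, rfl⟩|⟨i, h1, h2, rfl⟩
    · refine ⟨m (seq (i+1)), ⟨i, hi, Or.inl ⟨rfl, rfl⟩⟩, ?_⟩
      rintro w' ⟨i', hi', ⟨he, rfl⟩|⟨rfl, he⟩⟩
      · have : i = i' := by
          by_contra hne
          rcases Nat.lt_or_ge i i' with h|h
          · exact hinj i i' (by omega) (by omega) h he
          · exact hinj i' i (by omega) (by omega) (by omega) he.symm
        rw [this]
      · exfalso
        have := hcolm (i'+1) (by omega)
        rw [← he] at this
        exact this (hcol_const i (by omega))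
    · refine ⟨seq (i-1), ⟨i-1, by omega, Or.inr ⟨rfl, by rw [show i - 1 + 1 = i from by omega]⟩⟩, ?_⟩
      rintro w' ⟨i', hi', ⟨he, rfl⟩|⟨rfl, he⟩⟩
      · exfalso
        exact (hcolm i (by omega)) (by rw [he]; exact hcol_const i' (by omega))
      · have : seq i = seq (i'+1) := hminj he
        have hii : i = i' + 1 := by
          by_contra hne
          rcases Nat.lt_or_ge i (i'+1) with h|h
          · exact hinj i (i'+1) (by omega) (by omega) h this
          · exact hinj (i'+1) i (by omega) (by omega) (by omega) this.symm
        rw [show i' = i - 1 from by omega]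
  -- coverage of the four special vertices
  have hcov_s0 : cov (seq 0) := by
    rw [hcov]; exact Or.inl ⟨0, by omega, rfl⟩
  have hncov_ms0 : ¬ cov (m (seq 0)) := by
    rw [hcov]
    rintro (⟨i, hi, he⟩|⟨i, h1, h2, he⟩)
    · exact hcolm 0 (by omega) (he ▸ hcol_const i (by omega))
    · exact hinj 0 i (by omega) h2 (by omega) (hminj he)
  have hncov_send : ¬ cov (seq n0) := by
    rw [hcov]
    rintro (⟨i, hi, he⟩|⟨i, h1, h2, he⟩)
    · exact hinj i n0 (by omega) (le_refl _) hi he.symm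
    · exact hcolm i h2 (he ▸ hcol_const n0 (le_refl _))
  have hcov_msend : cov (m (seq n0)) := by
    rw [hcov]; exact Or.inr ⟨n0, hn0pos, le_refl _, rfl⟩
  -- exactly one endpoint of each negative edge is covered
  have hxor1 : cov c.u1 ↔ ¬ cov c.b1 := by
    rcases hs0 with h|h
    · rw [← h, ← show m (seq 0) = c.b1 from by rw [h, hm1]]
      exact ⟨fun _ => hncov_ms0, fun _ => hcov_s0⟩
    · rw [← h, ← show m (seq 0) = c.u1 from by rw [h, hmb1]]
      constructor
      · intro hc; exact absurd hc hncov_ms0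
      · intro hc; exact absurd hcov_s0 hc
  have hxor2 : cov c.u2 ↔ ¬ cov c.b2 := by
    rcases hsend with h|h
    · rw [← h, ← show m (seq n0) = c.b2 from by rw [h, hm2]]
      exact ⟨fun hc => absurd hc hncov_send, fun _ => absurd hcov_msend (by assumption)⟩
    · rw [← h, ← show m (seq n0) = c.u2 from by rw [h, hmb2]]
      exact ⟨fun _ => hncov_send, fun _ => hcov_msend⟩
  -- matching edges have both or neither endpoint covered, away from the special vertices
  have hX4 : ∀ v, v ≠ c.u1 → v ≠ c.b1 → v ≠ c.u2 → v ≠ c.b2 → (cov v ↔ cov (m v)) := by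
    have fwd : ∀ v, v ≠ c.u1 → v ≠ c.b1 → v ≠ c.u2 → v ≠ c.b2 → cov v → cov (m v) := by
      intro v h1 h2 h3 h4 hv
      rw [hcov] at hv ⊢
      rcases hv with ⟨i, hi, rfl⟩|⟨i, e1, e2, rfl⟩
      · rcases Nat.eq_zero_or_pos i with h0|h0
        · exfalso
          subst h0
          rcases hs0 with h|h
          · exact h1 h
          · exact h2 h
        · exact Or.inr ⟨i, by omega, by omega, rfl⟩
      · rw [hminv]
        by_cases hlt : i < n0
        · exact Or.inl ⟨i, hlt, rfl⟩
        · exfalso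
          have hieq : i = n0 := by omega
          rcases hsend with h|h
          · exact h4 (by rw [hieq, h, hm2])
          · exact h3 (by rw [hieq, h, hmb2])
    intro v h1 h2 h3 h4
    have g1 : m v ≠ c.u1 := fun h => h2 (by rw [← hminv v, h, hm1])
    have g2 : m v ≠ c.b1 := fun h => h1 (by rw [← hminv v, h, hmb1])
    have g3 : m v ≠ c.u2 := fun h => h4 (by rw [← hminv v, h, hm2])
    have g4 : m v ≠ c.b2 := fun h => h3 (by rw [← hminv v, h, hmb2])
    constructor
    · exact fwd v h1 h2 h3 h4
    · intro h
      have := fwd (m v) g1 g2 g3 g4 h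
      rw [hminv] at this
      exact this
  -- special vertices and their matching edges
  have hspec_e1 : ∀ v, s(v, m v) = s(c.u1,c.b1) ↔ (v = c.u1 ∨ v = c.b1) := by
    intro v
    constructor
    · intro h
      rcases Sym2.eq_iff.1 h with ⟨h1,h2⟩|⟨h1,h2⟩
      · exact Or.inl h1
      · exact Or.inr h1
    · rintro (rfl|rfl)
      · rw [hm1]
      · rw [hmb1]; exact Sym2.eq_swap
  have hspec_e2 : ∀ v, s(v, m v) = s(c.u2,c.b2) ↔ (v = c.u2 ∨ v = c.b2) := by
    intro v
    constructor
    · intro h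
      rcases Sym2.eq_iff.1 h with ⟨h1,h2⟩|⟨h1,h2⟩
      · exact Or.inl h1
      · exact Or.inr h1
    · rintro (rfl|rfl)
      · rw [hm2]
      · rw [hmb2]; exact Sym2.eq_swap
  -- the flow values
  set Mval : V → ℤ := fun v => if s(v, m v) = s(c.u1,c.b1) then (if cov c.b1 then 2 else -2)
      else if s(v, m v) = s(c.u2,c.b2) then (if cov c.b2 then 2 else -2)
      else (if cov v then 2 else -2) with hMval
  have hMval_symm : ∀ v, Mval v = Mval (m v) := by
    intro v
    rw [hMval]
    dsimp only
    have he : s(m v, m (m v)) = s(v, m v) := by rw [hminv]; exact Sym2.eq_swap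
    rw [he]
    by_cases h1 : s(v, m v) = s(c.u1,c.b1)
    · rw [if_pos h1, if_pos h1]
    by_cases h2 : s(v, m v) = s(c.u2,c.b2)
    · rw [if_neg h1, if_pos h2, if_neg h1, if_pos h2]
    rw [if_neg h1, if_neg h2, if_neg h1, if_neg h2]
    have hv1 : v ≠ c.u1 := fun h => h1 ((hspec_e1 v).2 (Or.inl h))
    have hv2 : v ≠ c.b1 := fun h => h1 ((hspec_e1 v).2 (Or.inr h))
    have hv3 : v ≠ c.u2 := fun h => h2 ((hspec_e2 v).2 (Or.inl h))
    have hv4 : v ≠ c.b2 := fun h => h2 ((hspec_e2 v).2 (Or.inr h))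
    have := hX4 v hv1 hv2 hv3 hv4
    by_cases hc : cov v
    · rw [if_pos hc, if_pos (this.1 hc)]
    · rw [if_neg hc, if_neg (fun h => hc (this.2 h))]
  set f : V → V → ℤ := fun v w => if w = m v then Mval v else if uedge v w then -3 else 1
    with hfdef
  have hfsymm : ∀ v w, f v w = f w v := by
    intro v w
    rw [hfdef]
    dsimp only
    by_cases h : w = m v
    · have h' : v = m w := by rw [h, hminv]
      rw [if_pos h, if_pos h', h]
      exact hMval_symm v
    · have h' : ¬ (v = m w) := fun hc => h (by rw [hc, hminv])
      rw [if_neg h, if_neg h']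
      by_cases hu : uedge v w
      · rw [if_pos hu, if_pos ((uedge_symm v w).1 hu)]
      · rw [if_neg hu, if_neg (fun hc => hu ((uedge_symm w v).1 hc))]
  have hsum : ∀ v, (∑ w : V, if c.G.Adj v w then f v w else 0)
      = Mval v + (if cov v then -2 else 2) := by
    intro v
    rw [c.sum_nbrs f v]
    have hmv : m v ∈ (c.G).neighborFinset v := (c.mem_nbr _ _).2 (hmadj v)
    rw [← Finset.insert_erase hmv, Finset.sum_insert (Finset.notMem_erase _ _)]
    have h1 : f v (m v) = Mval v := by rw [hfdef]; dsimp only; rw [if_pos rfl]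
    set Fn := ((c.G).neighborFinset v).erase (m v) with hFn
    have hcardFn : Fn.card = 2 := by rw [hFn, Finset.card_erase_of_mem hmv, c.cubic v]
    have h2 : ∀ w ∈ Fn, f v w = if uedge v w then -3 else 1 := by
      intro w hw
      rw [hfdef]; dsimp only
      rw [if_neg (Finset.mem_erase.1 hw).1]
    have h3 : (∑ w ∈ Fn, f v w) = (if cov v then -2 else 2) := by
      by_cases hc : cov v
      · obtain ⟨w0, hw0, huniq⟩ := cov_unique v hc
        have hw0Fn : w0 ∈ Fn := by
          rw [hFn]
          obtain ⟨hadj, hne⟩ := uedge_F v w0 hw0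
          exact Finset.mem_erase.2 ⟨hne, (c.mem_nbr _ _).2 hadj⟩
        rw [← Finset.insert_erase hw0Fn, Finset.sum_insert (Finset.notMem_erase _ _)]
        have e1 : f v w0 = -3 := by rw [h2 w0 hw0Fn, if_pos hw0]
        have e2 : ∀ w ∈ Fn.erase w0, f v w = 1 := by
          intro w hw
          obtain ⟨hne, hwFn⟩ := Finset.mem_erase.1 hw
          rw [h2 w hwFn, if_neg (fun hu => hne (huniq w hu))]
        rw [e1, Finset.sum_congr rfl e2, Finset.sum_const,
            Finset.card_erase_of_mem hw0Fn, hcardFn, if_pos hc]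
        norm_num
      · have e2 : ∀ w ∈ Fn, f v w = 1 := by
          intro w hw
          rw [h2 w hw, if_neg (fun hu => hc (uedge_cov v w hu))]
        rw [Finset.sum_congr rfl e2, Finset.sum_const, hcardFn, if_neg hc]
        norm_num
    rw [h1, h3]
  have hbound : ∀ v w, c.G.Adj v w → 1 ≤ |f v w| ∧ |f v w| ≤ 3 := by
    intro v w _
    rw [hfdef]; dsimp only
    have hM : Mval v = 2 ∨ Mval v = -2 := by
      rw [hMval]; dsimp only
      by_cases g1 : s(v, m v) = s(c.u1,c.b1)
      · rw [if_pos g1]; split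
        · exact Or.inl rfl
        · exact Or.inr rfl
      by_cases g2 : s(v, m v) = s(c.u2,c.b2)
      · rw [if_neg g1, if_pos g2]; split
        · exact Or.inl rfl
        · exact Or.inr rfl
      rw [if_neg g1, if_neg g2]; split
      · exact Or.inl rfl
      · exact Or.inr rfl
    by_cases h : w = m v
    · rw [if_pos h]
      rcases hM with hM|hM <;> rw [hM] <;> norm_num
    · rw [if_neg h]
      split <;> norm_num
  refine c.flow_of_f f hfsymm hbound ?_ ?_
  · intro v hcolv
    rw [hsum v]
    have hv1 : v ≠ c.u1 := fun h => by
      rw [h, c.col_u1] at hcolv; exact absurd hcolv (by decide)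
    rw [hMval]; dsimp only
    by_cases g1 : s(v, m v) = s(c.u1,c.b1)
    · have hvb : v = c.b1 := by
        rcases (hspec_e1 v).1 g1 with h|h
        · exact absurd h hv1
        · exact h
      rw [if_pos g1]
      subst hvb
      by_cases hcb : cov c.b1 <;> simp [hcb]
    · by_cases g2 : s(v, m v) = s(c.u2,c.b2)
      · have hv3 : v ≠ c.u2 := fun h => by
          rw [h, c.col_u2] at hcolv; exact absurd hcolv (by decide)
        have hvb : v = c.b2 := by
          rcases (hspec_e2 v).1 g2 with h|h
          · exact absurd h hv3
          · exact h
        rw [if_neg g1, if_pos g2]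
        subst hvb
        by_cases hcb : cov c.b2 <;> simp [hcb]
      · rw [if_neg g1, if_neg g2]
        by_cases hcb : cov v <;> simp [hcb]
  · intro v hcolv
    rw [hsum v]
    have hfu1 : f c.u1 c.b1 = (if cov c.b1 then 2 else -2) := by
      rw [hfdef]; dsimp only
      rw [if_pos (show c.b1 = m c.u1 by rw [hm1]), hMval]; dsimp only
      rw [if_pos ((hspec_e1 c.u1).2 (Or.inl rfl))]
    have hfu2 : f c.u2 c.b2 = (if cov c.b2 then 2 else -2) := by
      rw [hfdef]; dsimp only
      rw [if_pos (show c.b2 = m c.u2 by rw [hm2]), hMval]; dsimp only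
      rw [if_neg, if_pos ((hspec_e2 c.u2).2 (Or.inl rfl))]
      intro h
      rcases (hspec_e1 c.u2).1 h with h|h
      · exact c.ne_u1u2 h.symm
      · exact c.ne_u2b1 h
    by_cases hvu1 : v = c.u1
    · subst hvu1
      rw [if_pos rfl, if_neg c.ne_u1u2, hfu1, hMval]; dsimp only
      rw [if_pos ((hspec_e1 c.u1).2 (Or.inl rfl))]
      by_cases hcb : cov c.b1
      · rw [if_pos hcb, if_neg (fun h => (hxor1.1 h) hcb)]
        norm_num
      · rw [if_neg hcb, if_pos (hxor1.2 hcb)]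
        norm_num
    · by_cases hvu2 : v = c.u2
      · subst hvu2
        rw [if_neg hvu1, if_pos rfl, hfu2, hMval]; dsimp only
        rw [if_neg, if_pos ((hspec_e2 c.u2).2 (Or.inl rfl))]
        · by_cases hcb : cov c.b2
          · rw [if_pos hcb, if_neg (fun h => (hxor2.1 h) hcb)]
            norm_num
          · rw [if_neg hcb, if_pos (hxor2.2 hcb)]
            norm_num
        · intro h
          rcases (hspec_e1 c.u2).1 h with h|h
          · exact c.ne_u1u2 h.symm
          · exact c.ne_u2b1 h
      · have hvb1 : v ≠ c.b1 := fun h => by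
          rw [h, c.col_b1] at hcolv; exact absurd hcolv (by decide)
        have hvb2 : v ≠ c.b2 := fun h => by
          rw [h, c.col_b2] at hcolv; exact absurd hcolv (by decide)
        rw [if_neg hvu1, if_neg hvu2, hMval]; dsimp only
        rw [if_neg, if_neg]
        · by_cases hcb : cov v <;> simp [hcb]
        · intro h
          rcases (hspec_e2 v).1 h with h|h
          · exact hvu2 h
          · exact hvb2 h
        · intro h
          rcases (hspec_e1 v).1 h with h|h
          · exact hvu1 h
          · exact hvb1 h

end Ctx
/-- A flow-admissible signed cubic bipartite graph with exactly two
negative edges has flow number at most 4. -/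
theorem stmt8 [Fintype V] (G : SimpleGraph V) (σ : Sym2 V → ℤ)
    (hσ : IsSignature G σ) (hcubic : CubicGraph G) (hbip : G.Colorable 2)
    (h2 : (NegEdges G σ).ncard = 2) (hadm : FlowAdmissible G σ) :
    flowNumber G σ ≤ 4 := by
  classical
  obtain ⟨e, f, hef, hneg⟩ := Set.ncard_eq_two.1 h2
  have hmem : ∀ x ∈ NegEdges G σ, x ∈ G.edgeSet ∧ σ x = -1 := fun x hx => hx
  have heneg : e ∈ G.edgeSet ∧ σ e = -1 := by
    apply hmem; rw [hneg]; exact Set.mem_insert _ _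
  have hfneg : f ∈ G.edgeSet ∧ σ f = -1 := by
    apply hmem; rw [hneg]; exact Set.mem_insert_of_mem _ rfl
  have hC : G.Coloring (Fin 2) := hbip.some
  -- decompose the two negative edges with colored endpoints
  have hdec : ∀ x : Sym2 V, x ∈ G.edgeSet → ∃ u b, x = s(u,b) ∧ hC u = 0 ∧ hC b = 1 := by
    intro x hx
    induction x using Sym2.ind with
    | _ a b =>
      have hadj : G.Adj a b := G.mem_edgeSet.1 hx
      have hcol := hC.valid hadj
      rcases (by omega : (hC a : ℕ) = 0 ∧ (hC b : ℕ) = 1 ∨ (hC a : ℕ) = 1 ∧ (hC b : ℕ) = 0)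
        with ⟨g1,g2⟩|⟨g1,g2⟩
      · exact ⟨a, b, rfl, by omega, by omega⟩
      · exact ⟨b, a, Sym2.eq_swap.symm, by omega, by omega⟩
  obtain ⟨u1, b1, he1, hcu1, hcb1⟩ := hdec e heneg.1
  obtain ⟨u2, b2, he2, hcu2, hcb2⟩ := hdec f hfneg.1
  obtain ⟨k, τ0, φ0, ⟨hflow, hbd⟩⟩ := hadm
  have hcubic' : ∀ v : V, (G.neighborFinset v).card = 3 := by
    intro v
    have := hcubic v
    rw [Set.ncard_eq_toFinset_card'] at this
    exact this
  set c : Ctx V := {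
    G := G, σ := σ, col := hC,
    hcol := fun h => hC.valid h,
    u1 := u1, b1 := b1, u2 := u2, b2 := b2,
    adj1 := G.mem_edgeSet.1 (he1 ▸ heneg.1),
    adj2 := G.mem_edgeSet.1 (he2 ▸ hfneg.1),
    col_u1 := hcu1, col_b1 := hcb1, col_u2 := hcu2, col_b2 := hcb2,
    e_ne := by rw [← he1, ← he2]; exact hef,
    neg1 := by rw [← he1]; exact heneg.2,
    neg2 := by rw [← he2]; exact hfneg.2,
    pos := by
      intro x hx h1 h2
      rcases hσ x hx with h|h
      · exact h
      · exfalso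
        have : x ∈ NegEdges G σ := ⟨hx, h⟩
        rw [hneg] at this
        rcases this with h'|h'
        · exact h1 (by rw [h', he1])
        · exact h2 (by rw [h', he2])
    cubic := hcubic',
    τ0 := τ0, φ0 := φ0,
    flow0 := hflow,
    nz0 := fun x hx => by
      have := (hbd x hx).1
      intro hc
      rw [hc] at this
      simp at this } with hc
  have hex : ∃ τ φ, IsNZFlow G σ 4 τ φ := by
    rcases c.dichotomy with ⟨R, hR1, hR2, hR3, hR4, hR5⟩|⟨m, hm1, hm2, hm3, hm4⟩
    · exact c.switch_flow R hR1 hR2 hR3 hR4 hR5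
    · exact c.main_flow m hm1 hm2 hm3 hm4
  obtain ⟨τ, φ, hNZ⟩ := hex
  apply Nat.sInf_le
  refine ⟨τ, φ, ?_⟩
  have : ((4:ℕ) : ℤ) = 4 := by norm_num
  rw [this]
  exact hNZ
end

section
/- Let G be a bridgeless graph and let v be a vertex of degree 3 with incident edges e₁, e₂, e₃, and let D be an orientation in which e₁, e₂, e₃ are all directed out of v (or all into v). If G admits a nowhere-zero ℤ₆-flow (D, φ) with φ(e₁) = 1, φ(e₂) = x and φ(e₃) = −1 − x (for some 1 ≤ x ≤ 4), then G admits a nowhere-zero integer 6-flow (D, φ') with φ'(e₁) = 1, φ'(e₂) = x and φ'(e₃) = −1 − x. -/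
open Finset SimpleGraph

attribute [local instance] Classical.propDecidable

variable {V : Type}

/-! Tutte's argument turning a `ℤₖ`-flow into an integer `k`-flow, run with the edges at `v`
frozen. Among the integer lifts of `ψ` with values in `(-k, k)` that agree with the prescribed
values at `v`, all excesses are multiples of `k`; take one of minimal total excess. If some vertex
`u` has positive excess, let `S` be the set of vertices reachable from `u` by edges away from `v`
that carry flow out of their tail. Were all excesses on `S` nonnegative, the excess of `S`, at
least `k`, would equal the flow leaving `S`, which only the frozen edges can carry; at a vertex of
degree three this is `0`, a single value, or minus a single value, hence less than `k`. So `S`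
contains a vertex of negative excess, and pushing `k` units along a path to it (which keeps every
value in `(-k, k)` and in its residue class) lowers the total excess. -/

lemma IsOrientation.mul_self {G : SimpleGraph V} {σ : Sym2 V → ℤ} {τ : V → Sym2 V → ℤ}
    (hτ : IsOrientation G σ τ) (w : V) (e : Sym2 V) : τ w e * τ w e = 1 := by
  rcases hτ.1 w e with h | h <;> simp [h]

lemma IsOrientation.swap_eq_neg {G : SimpleGraph V} {τ : V → Sym2 V → ℤ}
    (hτ : IsOrientation G allPos τ) {a b : V} (h : G.Adj a b) :
    τ b s(a, b) = -τ a s(a, b) := by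
  have h2 := hτ.2 a b h
  simp only [allPos] at h2
  rcases hτ.1 a s(a, b) with h1 | h1 <;> rw [h1] at h2 ⊢ <;> omega

lemma Relation.ReflTransGen.eq_or_exists_head_restrict_erase {α : Type*} [DecidableEq α]
    {r : α → α → Prop} {U : Finset α} {a c : α}
    (h : Relation.ReflTransGen (fun p q => r p q ∧ p ∈ U ∧ q ∈ U) a c) :
    c = a ∨ ∃ b, r a b ∧ a ∈ U ∧ b ∈ U.erase a ∧
      Relation.ReflTransGen (fun p q => r p q ∧ p ∈ U.erase a ∧ q ∈ U.erase a) b c := by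
  induction h with
  | refl => exact Or.inl rfl
  | @tail c d _ hcd ih =>
    obtain ⟨hr, hc, hd⟩ := hcd
    by_cases hda : d = a
    · exact Or.inl hda
    by_cases hca : c = a
    · subst hca
      exact Or.inr ⟨d, hr, hc, Finset.mem_erase.2 ⟨hda, hd⟩, .refl⟩
    rcases ih with rfl | ⟨b, hab, ha, hb, hbc⟩
    · exact absurd rfl hca
    · exact Or.inr ⟨b, hab, ha, hb,
        hbc.tail ⟨hr, Finset.mem_erase.2 ⟨hca, hc⟩, Finset.mem_erase.2 ⟨hda, hd⟩⟩⟩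

lemma forall_update_bounded_lift {k : ℕ} {ψ : Sym2 V → ZMod k} {S : Set (Sym2 V)}
    {φ : Sym2 V → ℤ} (hφ : ∀ e ∈ S, (φ e : ZMod k) = ψ e ∧ |φ e| < k) {e₀ : Sym2 V} {c : ℤ}
    (hc : (c : ZMod k) = ψ e₀ ∧ |c| < k) :
    ∀ e ∈ S, (Function.update φ e₀ c e : ZMod k) = ψ e ∧ |Function.update φ e₀ c e| < k := by
  intro e he
  rcases eq_or_ne e e₀ with rfl | hne
  · simpa using hc
  · simpa [hne] using hφ e he

namespace SimpleGraph

variable {G : SimpleGraph V} {τ : V → Sym2 V → ℤ}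

lemma exists_adj_eq_of_mem_incidenceSet {v : V} {e : Sym2 V}
    (h : e ∈ G.incidenceSet v) : ∃ a, G.Adj v a ∧ e = s(v, a) := by
  obtain ⟨a, rfl⟩ := Sym2.mem_iff_exists.1 h.2
  exact ⟨a, (G.mem_incidenceSet v a).1 h, rfl⟩

lemma neighborSet_eq_of_ncard_eq_three {v a₁ a₂ a₃ : V}
    (hdeg : (G.neighborSet v).ncard = 3) (ha₁ : G.Adj v a₁) (ha₂ : G.Adj v a₂) (ha₃ : G.Adj v a₃)
    (h₁₂ : a₁ ≠ a₂) (h₁₃ : a₁ ≠ a₃) (h₂₃ : a₂ ≠ a₃) : G.neighborSet v = {a₁, a₂, a₃} := by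
  refine (Set.eq_of_subset_of_ncard_le ?_ ?_ (Set.finite_of_ncard_ne_zero (by omega))).symm
  · rintro z (rfl | rfl | rfl) <;> assumption
  · rw [hdeg, Set.ncard_eq_three.2 ⟨a₁, a₂, a₃, h₁₂, h₁₃, h₂₃, rfl⟩]

noncomputable def edgeFlow (G : SimpleGraph V) (τ : V → Sym2 V → ℤ) (φ : Sym2 V → ℤ)
    (w z : V) : ℤ :=
  if G.Adj w z then τ w s(w, z) * φ s(w, z) else 0

lemma adj_of_edgeFlow_ne_zero {φ : Sym2 V → ℤ} {w z : V} (h : G.edgeFlow τ φ w z ≠ 0) :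
    G.Adj w z := by
  by_contra hwz
  simp [edgeFlow, hwz] at h

lemma edgeFlow_swap (hτ : IsOrientation G allPos τ) (φ : Sym2 V → ℤ) (w z : V) :
    G.edgeFlow τ φ z w = -G.edgeFlow τ φ w z := by
  by_cases h : G.Adj w z
  · simp [edgeFlow, h, h.symm, Sym2.eq_swap (a := z), hτ.swap_eq_neg h]
  · have h' : ¬G.Adj z w := fun h' => h h'.symm
    simp [edgeFlow, h, h']

lemma sum_edgeFlow_of_neighborSet_eq {v a₁ a₂ a₃ : V} (hN : G.neighborSet v = {a₁, a₂, a₃})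
    (h₁₂ : a₁ ≠ a₂) (h₁₃ : a₁ ≠ a₃) (h₂₃ : a₂ ≠ a₃) (φ : Sym2 V → ℤ) (A : Finset V) :
    ∑ a ∈ A, G.edgeFlow τ φ v a =
      (if a₁ ∈ A then τ v s(v, a₁) * φ s(v, a₁) else 0) +
      (if a₂ ∈ A then τ v s(v, a₂) * φ s(v, a₂) else 0) +
      (if a₃ ∈ A then τ v s(v, a₃) * φ s(v, a₃) else 0) := by
  have hadj : ∀ a, G.Adj v a ↔ a = a₁ ∨ a = a₂ ∨ a = a₃ := fun a => by
    rw [← mem_neighborSet, hN]; simp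
  have hterm : ∀ a, G.edgeFlow τ φ v a =
      (if a = a₁ then τ v s(v, a₁) * φ s(v, a₁) else 0) +
      (if a = a₂ then τ v s(v, a₂) * φ s(v, a₂) else 0) +
      (if a = a₃ then τ v s(v, a₃) * φ s(v, a₃) else 0) := fun a => by
    by_cases ha : G.Adj v a
    · rcases (hadj a).1 ha with rfl | rfl | rfl <;> simp [edgeFlow, ha, h₁₂, h₁₃, h₂₃, h₁₂.symm,
        h₁₃.symm, h₂₃.symm]
    · simp only [hadj, not_or] at ha
      simp [edgeFlow, hadj, ha]
  simp only [hterm, Finset.sum_add_distrib, Finset.sum_ite_eq']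

noncomputable def pushFlow (τ : V → Sym2 V → ℤ) (k : ℤ) (φ : Sym2 V → ℤ) (a b : V) :
    Sym2 V → ℤ :=
  Function.update φ s(a, b) (φ s(a, b) - k * τ a s(a, b))

lemma edgeFlow_pushFlow (hτ : IsOrientation G allPos τ) (k : ℤ) (φ : Sym2 V → ℤ) {a b : V}
    (hab : G.Adj a b) (w z : V) :
    G.edgeFlow τ (pushFlow τ k φ a b) w z =
      G.edgeFlow τ φ w z - (if w = a ∧ z = b then k else 0) + (if w = b ∧ z = a then k else 0) := by
  by_cases h₁ : w = a ∧ z = b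
  · obtain ⟨rfl, rfl⟩ := h₁
    simp only [edgeFlow, pushFlow, if_pos hab, Function.update_self, and_self, if_true,
      hab.ne, false_and, if_false]
    linear_combination (-k) * hτ.mul_self w s(w, z)
  by_cases h₂ : w = b ∧ z = a
  · obtain ⟨rfl, rfl⟩ := h₂
    simp only [edgeFlow, pushFlow, if_pos hab.symm, Sym2.eq_swap (a := w), Function.update_self,
      hτ.swap_eq_neg hab, and_self, if_true, hab.ne', false_and, if_false]
    linear_combination k * hτ.mul_self z s(z, w)
  simp [edgeFlow, pushFlow, h₁, h₂]

lemma edgeFlow_pushFlow_of_ne (hτ : IsOrientation G allPos τ) (k : ℤ) (φ : Sym2 V → ℤ)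
    {a b w z : V} (hab : G.Adj a b) (hw : w ≠ a) (hz : z ≠ a) :
    G.edgeFlow τ (pushFlow τ k φ a b) w z = G.edgeFlow τ φ w z := by
  simp [edgeFlow_pushFlow hτ k φ hab, hw, hz]

def IsBoundedLift (G : SimpleGraph V) (k : ℕ) (ψ : Sym2 V → ZMod k) (v : V)
    (φ₀ φ : Sym2 V → ℤ) : Prop :=
  (∀ e ∈ G.edgeSet, (φ e : ZMod k) = ψ e ∧ |φ e| < k) ∧ ∀ a, G.Adj v a → φ s(v, a) = φ₀ s(v, a)

def residualAdj (G : SimpleGraph V) (τ : V → Sym2 V → ℤ) (v : V) (φ : Sym2 V → ℤ)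
    (p q : V) : Prop :=
  p ≠ v ∧ q ≠ v ∧ 0 < G.edgeFlow τ φ p q

namespace IsBoundedLift

variable {k : ℕ} {ψ : Sym2 V → ZMod k} {v : V} {φ₀ φ : Sym2 V → ℤ}

lemma edgeFlow_eq (h : G.IsBoundedLift k ψ v φ₀ φ) (a : V) :
    G.edgeFlow τ φ v a = G.edgeFlow τ φ₀ v a := by
  by_cases hva : G.Adj v a
  · simp [edgeFlow, hva, h.2 a hva]
  · simp [edgeFlow, hva]

lemma pushFlow (hτ : IsOrientation G allPos τ) (h : G.IsBoundedLift k ψ v φ₀ φ) {a b : V}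
    (hab : G.residualAdj τ v φ a b) : G.IsBoundedLift k ψ v φ₀ (pushFlow τ k φ a b) := by
  obtain ⟨hav, hbv, hpos⟩ := hab
  have hadj := adj_of_edgeFlow_ne_zero hpos.ne'
  refine ⟨fun e he => ?_, fun c hc => ?_⟩
  · by_cases hee : e = s(a, b)
    · subst hee
      obtain ⟨hcast, hlt⟩ := h.1 _ he
      rw [edgeFlow, if_pos hadj] at hpos
      simp only [SimpleGraph.pushFlow, Function.update_self]
      refine ⟨by push_cast; simp [hcast], ?_⟩
      rw [abs_lt] at hlt ⊢
      rcases hτ.1 a s(a, b) with ht | ht <;> rw [ht] at hpos ⊢ <;> constructor <;> linarith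
    · rw [SimpleGraph.pushFlow, Function.update_of_ne hee]
      exact h.1 e he
  · have hne : s(v, c) ≠ s(a, b) := by
      rw [Ne, Sym2.eq_iff]
      tauto
    rw [SimpleGraph.pushFlow, Function.update_of_ne hne]
    exact h.2 c hc

end IsBoundedLift

variable [Fintype V]

noncomputable def excess (G : SimpleGraph V) (τ : V → Sym2 V → ℤ) (φ : Sym2 V → ℤ)
    (w : V) : ℤ :=
  ∑ z, G.edgeFlow τ φ w z

noncomputable def totalExcess (G : SimpleGraph V) (τ : V → Sym2 V → ℤ)
    (φ : Sym2 V → ℤ) : ℕ :=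
  ∑ w, (G.excess τ φ w).natAbs

lemma sum_excess_eq_sum_edgeFlow_compl (hτ : IsOrientation G allPos τ) (φ : Sym2 V → ℤ)
    (S : Finset V) :
    ∑ w ∈ S, G.excess τ φ w = ∑ w ∈ S, ∑ z ∈ Sᶜ, G.edgeFlow τ φ w z := by
  have hinner : ∑ w ∈ S, ∑ z ∈ S, G.edgeFlow τ φ w z = 0 := by
    have h := calc ∑ w ∈ S, ∑ z ∈ S, G.edgeFlow τ φ w z
        = ∑ z ∈ S, ∑ w ∈ S, G.edgeFlow τ φ w z := Finset.sum_comm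
      _ = ∑ z ∈ S, ∑ w ∈ S, -G.edgeFlow τ φ z w :=
          Finset.sum_congr rfl fun _ _ => Finset.sum_congr rfl fun _ _ => edgeFlow_swap hτ φ _ _
      _ = -∑ w ∈ S, ∑ z ∈ S, G.edgeFlow τ φ w z := by simp only [Finset.sum_neg_distrib]
    linarith
  simp only [excess, ← Finset.sum_add_sum_compl S, Finset.sum_add_distrib, hinner, zero_add]

lemma exists_excess_pos (hτ : IsOrientation G allPos τ) {φ : Sym2 V → ℤ}
    (h : G.totalExcess τ φ ≠ 0) : ∃ u, 0 < G.excess τ φ u := by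
  by_contra! hle
  have hsum : ∑ w, G.excess τ φ w = 0 := by
    simpa using sum_excess_eq_sum_edgeFlow_compl hτ φ Finset.univ
  have hzero := (Finset.sum_eq_zero_iff_of_nonpos fun w _ => hle w).1 hsum
  exact h (Finset.sum_eq_zero fun w _ => by simp [hzero w])

lemma excess_pushFlow (hτ : IsOrientation G allPos τ) (k : ℤ) (φ : Sym2 V → ℤ) {a b : V}
    (hab : G.Adj a b) (w : V) :
    G.excess τ (pushFlow τ k φ a b) w =
      G.excess τ φ w - (if w = a then k else 0) + (if w = b then k else 0) := by
  simp [excess, edgeFlow_pushFlow hτ k φ hab, Finset.sum_add_distrib, Finset.sum_sub_distrib,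
    ite_and]

lemma totalExcess_pushFlow (hτ : IsOrientation G allPos τ) (k : ℤ) (φ : Sym2 V → ℤ) {a b : V}
    (hab : G.Adj a b) :
    (G.totalExcess τ (pushFlow τ k φ a b) : ℤ) = G.totalExcess τ φ
      + (|G.excess τ φ a - k| - |G.excess τ φ a|) + (|G.excess τ φ b + k| - |G.excess τ φ b|) := by
  have hterm : ∀ w, |G.excess τ (pushFlow τ k φ a b) w| = |G.excess τ φ w|
      + (if w = a then |G.excess τ φ a - k| - |G.excess τ φ a| else 0)
      + (if w = b then |G.excess τ φ b + k| - |G.excess τ φ b| else 0) := by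
    intro w
    rw [excess_pushFlow hτ k φ hab]
    by_cases ha : w = a
    · subst ha; simp [hab.ne]
    by_cases hb : w = b
    · subst hb; simp [ha]
    simp [ha, hb]
  simp only [totalExcess, Nat.cast_sum, Int.natCast_natAbs, hterm, Finset.sum_add_distrib,
    Finset.sum_ite_eq', Finset.mem_univ, if_true]

namespace IsBoundedLift

variable {k : ℕ} {ψ : Sym2 V → ZMod k} {v : V} {φ₀ φ : Sym2 V → ℤ}

lemma dvd_excess
    (hψ : ∀ w, (∑ z, if G.Adj w z then (τ w s(w, z) : ZMod k) * ψ s(w, z) else 0) = 0)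
    (h : G.IsBoundedLift k ψ v φ₀ φ) (w : V) : (k : ℤ) ∣ G.excess τ φ w := by
  rw [← ZMod.intCast_zmod_eq_zero_iff_dvd, ← hψ w, excess, Int.cast_sum]
  refine Finset.sum_congr rfl fun z _ => ?_
  by_cases hwz : G.Adj w z
  · simp [edgeFlow, hwz, (h.1 _ (G.mem_edgeSet.2 hwz)).1]
  · simp [edgeFlow, hwz]

lemma excess_eq (h : G.IsBoundedLift k ψ v φ₀ φ) : G.excess τ φ v = G.excess τ φ₀ v :=
  Finset.sum_congr rfl fun a _ => h.edgeFlow_eq a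

lemma exists_reflTransGen_excess_neg (hτ : IsOrientation G allPos τ)
    (hψ : ∀ w, (∑ z, if G.Adj w z then (τ w s(w, z) : ZMod k) * ψ s(w, z) else 0) = 0)
    (h : G.IsBoundedLift k ψ v φ₀ φ) (hv : G.excess τ φ₀ v = 0)
    (hcut : ∀ A : Finset V, -(k : ℤ) < ∑ a ∈ A, G.edgeFlow τ φ₀ v a)
    {u : V} (hu : 0 < G.excess τ φ u) :
    ∃ w, Relation.ReflTransGen (G.residualAdj τ v φ) u w ∧ G.excess τ φ w < 0 := by
  by_contra! hnonneg
  set S := Finset.univ.filter (Relation.ReflTransGen (G.residualAdj τ v φ) u)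
  have hS : ∀ w, w ∈ S ↔ Relation.ReflTransGen (G.residualAdj τ v φ) u w := by simp [S]
  have hvS : v ∉ S := by
    rw [hS]
    intro huv
    rcases huv.cases_tail with rfl | ⟨c, -, -, hvv, -⟩
    · rw [h.excess_eq, hv] at hu
      exact hu.false
    · exact hvv rfl
  have hlower : (k : ℤ) ≤ ∑ w ∈ S, G.excess τ φ w :=
    (Int.le_of_dvd hu (h.dvd_excess hψ u)).trans <|
      Finset.single_le_sum (fun w hw => hnonneg w ((hS w).1 hw)) ((hS u).2 .refl)
  -- by maximality of `S`, the edges leaving `S` away from `v` carry no flow out of `S`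
  have hboundary : ∀ w ∈ S, ∑ z ∈ Sᶜ, G.edgeFlow τ φ w z ≤ G.edgeFlow τ φ w v := by
    intro w hw
    rw [← Finset.add_sum_erase _ _ (Finset.mem_compl.2 hvS)]
    have hrest : ∑ z ∈ Sᶜ.erase v, G.edgeFlow τ φ w z ≤ 0 := by
      refine Finset.sum_nonpos fun z hz => ?_
      obtain ⟨hzv, hzS⟩ := Finset.mem_erase.1 hz
      by_contra! hpos
      exact Finset.mem_compl.1 hzS <|
        (hS z).2 (((hS w).1 hw).tail ⟨fun hwv => hvS (hwv ▸ hw), hzv, hpos⟩)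
    linarith
  have hupper : ∑ w ∈ S, G.excess τ φ w < k := calc
    ∑ w ∈ S, G.excess τ φ w = ∑ w ∈ S, ∑ z ∈ Sᶜ, G.edgeFlow τ φ w z :=
        sum_excess_eq_sum_edgeFlow_compl hτ φ S
    _ ≤ ∑ w ∈ S, G.edgeFlow τ φ w v := Finset.sum_le_sum hboundary
    _ = -∑ w ∈ S, G.edgeFlow τ φ₀ v w := by
        simp [edgeFlow_swap hτ φ v, h.edgeFlow_eq, Finset.sum_neg_distrib]
    _ < k := by linarith [hcut S]
  linarith

lemma exists_totalExcess_lt_of_reflTransGen (hτ : IsOrientation G allPos τ)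
    (hψ : ∀ w, (∑ z, if G.Adj w z then (τ w s(w, z) : ZMod k) * ψ s(w, z) else 0) = 0)
    (hk : 0 < k) (U : Finset V) (h : G.IsBoundedLift k ψ v φ₀ φ) {u w : V}
    (hu : 0 < G.excess τ φ u) (hw : G.excess τ φ w < 0)
    (hpath : Relation.ReflTransGen (fun p q => G.residualAdj τ v φ p q ∧ p ∈ U ∧ q ∈ U) u w) :
    ∃ φ', G.IsBoundedLift k ψ v φ₀ φ' ∧ G.totalExcess τ φ' < G.totalExcess τ φ := by
  induction U using Finset.strongInduction generalizing φ u with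
  | H U ih =>
  rcases hpath.eq_or_exists_head_restrict_erase with rfl | ⟨b, hub, huU, -, hbw⟩
  · exact absurd hu (not_lt.2 hw.le)
  have hadj := adj_of_edgeFlow_ne_zero hub.2.2.ne'
  have hku : (k : ℤ) ≤ G.excess τ φ u := Int.le_of_dvd hu (h.dvd_excess hψ u)
  have htot := totalExcess_pushFlow hτ k φ hadj
  rw [abs_of_nonneg (by linarith : 0 ≤ G.excess τ φ u - k),
    abs_of_nonneg (by linarith : 0 ≤ G.excess τ φ u)] at htot
  rcases lt_or_ge (G.excess τ φ b) 0 with hb | hb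
  · have hkb : (k : ℤ) ≤ -G.excess τ φ b :=
      Int.le_of_dvd (by linarith) (h.dvd_excess hψ b).neg_right
    rw [abs_of_nonpos (by linarith : G.excess τ φ b + k ≤ 0), abs_of_nonpos hb.le] at htot
    exact ⟨_, h.pushFlow hτ hub, by omega⟩
  -- pushing along `u → b` moves the surplus to `b` without changing the total excess,
  -- and the rest of the path avoids `u`, so it survives the push
  rw [abs_of_nonneg (by linarith : 0 ≤ G.excess τ φ b + k), abs_of_nonneg hb] at htot
  have hwu : w ≠ u := fun hwu => absurd hu (not_lt.2 (hwu ▸ hw.le))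
  have hwb : w ≠ b := fun hwb => absurd hb (not_le.2 (hwb ▸ hw))
  obtain ⟨φ', h', hlt⟩ := ih (U.erase u) (Finset.erase_ssubset huU) (h.pushFlow hτ hub)
    (u := b)
    (by simp only [excess_pushFlow hτ k φ hadj, hadj.ne', if_false, if_true, sub_zero]; linarith)
    (by simpa [excess_pushFlow hτ k φ hadj, hwu, hwb] using hw)
    (Relation.ReflTransGen.mono (fun p q ⟨hpq, hp, hq⟩ => ⟨⟨hpq.1, hpq.2.1, by
      rw [edgeFlow_pushFlow_of_ne hτ k φ hadj (Finset.ne_of_mem_erase hp)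
        (Finset.ne_of_mem_erase hq)]; exact hpq.2.2⟩, hp, hq⟩) _ _ hbw)
  exact ⟨φ', h', by omega⟩

lemma exists_totalExcess_eq_zero (hτ : IsOrientation G allPos τ)
    (hψ : ∀ w, (∑ z, if G.Adj w z then (τ w s(w, z) : ZMod k) * ψ s(w, z) else 0) = 0)
    (hk : 0 < k) (hv : G.excess τ φ₀ v = 0)
    (hcut : ∀ A : Finset V, -(k : ℤ) < ∑ a ∈ A, G.edgeFlow τ φ₀ v a)
    (h : G.IsBoundedLift k ψ v φ₀ φ) :
    ∃ φ', G.IsBoundedLift k ψ v φ₀ φ' ∧ G.totalExcess τ φ' = 0 := by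
  induction hn : G.totalExcess τ φ using Nat.strong_induction_on generalizing φ with
  | _ n ih =>
  by_cases h0 : n = 0
  · exact ⟨φ, h, hn.trans h0⟩
  obtain ⟨u, hu⟩ := exists_excess_pos hτ (hn ▸ h0)
  obtain ⟨w, hpath, hw⟩ := h.exists_reflTransGen_excess_neg hτ hψ hv hcut hu
  obtain ⟨φ', h', hlt⟩ := exists_totalExcess_lt_of_reflTransGen hτ hψ hk Finset.univ h hu hw
    (Relation.ReflTransGen.mono (fun p q hpq => ⟨hpq, Finset.mem_univ p, Finset.mem_univ q⟩)
      _ _ hpath)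
  exact ih _ (hn ▸ hlt) h' rfl

end IsBoundedLift

theorem exists_isFlow_isBoundedLift {k : ℕ} (hk : 0 < k) (ψ : Sym2 V → ZMod k)
    (hτ : IsOrientation G allPos τ)
    (hψ : ∀ w, (∑ z, if G.Adj w z then (τ w s(w, z) : ZMod k) * ψ s(w, z) else 0) = 0)
    (v : V) (φ₀ : Sym2 V → ℤ) (hφ₀ : ∀ e ∈ G.edgeSet, (φ₀ e : ZMod k) = ψ e ∧ |φ₀ e| < k)
    (hv : G.excess τ φ₀ v = 0)
    (hcut : ∀ A : Finset V, -(k : ℤ) < ∑ a ∈ A, G.edgeFlow τ φ₀ v a) :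
    ∃ φ, IsFlow G allPos τ φ ∧ G.IsBoundedLift k ψ v φ₀ φ := by
  obtain ⟨φ, h, h0⟩ :=
    IsBoundedLift.exists_totalExcess_eq_zero hτ hψ hk hv hcut ⟨hφ₀, fun _ _ => rfl⟩
  refine ⟨φ, ⟨hτ, fun w => ?_⟩, h⟩
  exact Int.natAbs_eq_zero.1 (Finset.sum_eq_zero_iff.1 h0 w (Finset.mem_univ w))

theorem exists_isFlow_isBoundedLift_of_neighborSet_eq {k : ℕ} (hk : 0 < k) (ψ : Sym2 V → ZMod k)
    (hτ : IsOrientation G allPos τ)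
    (hψ : ∀ w, (∑ z, if G.Adj w z then (τ w s(w, z) : ZMod k) * ψ s(w, z) else 0) = 0)
    {v a₁ a₂ a₃ : V} (hN : G.neighborSet v = {a₁, a₂, a₃})
    (h₁₂ : a₁ ≠ a₂) (h₁₃ : a₁ ≠ a₃) (h₂₃ : a₂ ≠ a₃)
    (φ₀ : Sym2 V → ℤ) (hφ₀ : ∀ e ∈ G.edgeSet, (φ₀ e : ZMod k) = ψ e ∧ |φ₀ e| < k)
    (hv : τ v s(v, a₁) * φ₀ s(v, a₁) + τ v s(v, a₂) * φ₀ s(v, a₂) +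
      τ v s(v, a₃) * φ₀ s(v, a₃) = 0) :
    ∃ φ, IsFlow G allPos τ φ ∧ G.IsBoundedLift k ψ v φ₀ φ := by
  have hsum := sum_edgeFlow_of_neighborSet_eq (τ := τ) hN h₁₂ h₁₃ h₂₃ φ₀
  have hbound : ∀ a, G.Adj v a → |τ v s(v, a) * φ₀ s(v, a)| < k := fun a ha => by
    rcases hτ.1 v s(v, a) with h | h <;> simp [h, (hφ₀ _ (G.mem_edgeSet.2 ha)).2]
  have hadj : ∀ a ∈ ({a₁, a₂, a₃} : Set V), G.Adj v a := fun a ha => by rwa [← hN] at ha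
  obtain ⟨hlo₁, hhi₁⟩ := abs_lt.1 (hbound a₁ (hadj a₁ (by simp)))
  obtain ⟨hlo₂, hhi₂⟩ := abs_lt.1 (hbound a₂ (hadj a₂ (by simp)))
  obtain ⟨hlo₃, hhi₃⟩ := abs_lt.1 (hbound a₃ (hadj a₃ (by simp)))
  -- by `hv`, a sum over some of the three edges at `v` is `0`, one term, or minus one term
  refine exists_isFlow_isBoundedLift hk ψ hτ hψ v φ₀ hφ₀
    (by simpa only [excess, hsum, Finset.mem_univ, if_true] using hv) fun A => ?_
  rw [hsum]
  split_ifs <;> linarith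

end SimpleGraph

theorem stmt9_general [Fintype V] (G : SimpleGraph V)
    (v : V) (hdeg : (G.neighborSet v).ncard = 3)
    (e₁ e₂ e₃ : Sym2 V)
    (h₁ : e₁ ∈ G.incidenceSet v) (h₂ : e₂ ∈ G.incidenceSet v) (h₃ : e₃ ∈ G.incidenceSet v)
    (hne₁₂ : e₁ ≠ e₂) (hne₁₃ : e₁ ≠ e₃) (hne₂₃ : e₂ ≠ e₃)
    (τ : V → Sym2 V → ℤ) (hτ : IsOrientation G allPos τ)
    (hdir : (τ v e₁ = -1 ∧ τ v e₂ = -1 ∧ τ v e₃ = -1) ∨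
      (τ v e₁ = 1 ∧ τ v e₂ = 1 ∧ τ v e₃ = 1))
    (x : ℤ) (hx1 : 1 ≤ x) (hx4 : x ≤ 4)
    (ψ : Sym2 V → ZMod 6)
    (hK : ∀ w : V, (∑ z : V, if G.Adj w z then (τ w s(w, z) : ZMod 6) * ψ s(w, z) else 0) = 0)
    (hnz : ∀ e ∈ G.edgeSet, ψ e ≠ 0)
    (hv1 : ψ e₁ = 1) (hv2 : ψ e₂ = (x : ZMod 6)) (hv3 : ψ e₃ = ((-1 - x : ℤ) : ZMod 6)) :
    ∃ φ' : Sym2 V → ℤ, IsFlow G allPos τ φ' ∧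
      (∀ e ∈ G.edgeSet, 0 < |φ' e| ∧ |φ' e| < 6) ∧
      φ' e₁ = 1 ∧ φ' e₂ = x ∧ φ' e₃ = -1 - x := by
  obtain ⟨a₁, ha₁, rfl⟩ := G.exists_adj_eq_of_mem_incidenceSet h₁
  obtain ⟨a₂, ha₂, rfl⟩ := G.exists_adj_eq_of_mem_incidenceSet h₂
  obtain ⟨a₃, ha₃, rfl⟩ := G.exists_adj_eq_of_mem_incidenceSet h₃
  have h₁₂ : a₁ ≠ a₂ := by rintro rfl; exact hne₁₂ rfl
  have h₁₃ : a₁ ≠ a₃ := by rintro rfl; exact hne₁₃ rfl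
  have h₂₃ : a₂ ≠ a₃ := by rintro rfl; exact hne₂₃ rfl
  set φ₀ := Function.update (Function.update (Function.update (fun e => ((ψ e).val : ℤ))
    s(v, a₁) 1) s(v, a₂) x) s(v, a₃) (-1 - x)
  have hφ₀₁ : φ₀ s(v, a₁) = 1 := by simp [φ₀, hne₁₂, hne₁₃]
  have hφ₀₂ : φ₀ s(v, a₂) = x := by simp [φ₀, hne₂₃]
  have hφ₀₃ : φ₀ s(v, a₃) = -1 - x := by simp [φ₀]
  have hφ₀ : ∀ e ∈ G.edgeSet, (φ₀ e : ZMod 6) = ψ e ∧ |φ₀ e| < 6 := by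
    have hval : ∀ e ∈ G.edgeSet, (((ψ e).val : ℤ) : ZMod 6) = ψ e ∧ |((ψ e).val : ℤ)| < 6 :=
      fun e _ => ⟨by simp, by rw [abs_of_nonneg (by positivity)]; exact_mod_cast (ψ e).val_lt⟩
    exact forall_update_bounded_lift (forall_update_bounded_lift (forall_update_bounded_lift hval
      ⟨by simp [hv1], by norm_num⟩) ⟨hv2.symm, by rw [abs_lt]; constructor <;> omega⟩)
        ⟨hv3.symm, by rw [abs_lt]; constructor <;> omega⟩
  obtain ⟨φ, hflow, hφ, hfix⟩ := exists_isFlow_isBoundedLift_of_neighborSet_eq (by norm_num) ψ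
    hτ hK (neighborSet_eq_of_ncard_eq_three hdeg ha₁ ha₂ ha₃ h₁₂ h₁₃ h₂₃) h₁₂ h₁₃ h₂₃ φ₀ hφ₀
    (by rcases hdir with ⟨t₁, t₂, t₃⟩ | ⟨t₁, t₂, t₃⟩ <;> rw [t₁, t₂, t₃, hφ₀₁, hφ₀₂, hφ₀₃] <;> ring)
  refine ⟨φ, hflow, fun e he => ⟨abs_pos.2 fun h0 => hnz e he ?_, (hφ e he).2⟩,
    (hfix a₁ ha₁).trans hφ₀₁, (hfix a₂ ha₂).trans hφ₀₂, (hfix a₃ ha₃).trans hφ₀₃⟩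
  rw [← (hφ e he).1, h0, Int.cast_zero]

/-- A `ℤ₆`-flow with prescribed values `1, x, -1-x` on the three edges at a
degree-3 vertex (all oriented out of, or all into, that vertex) of a bridgeless graph can
be turned into an integer nowhere-zero 6-flow with the same orientation and the same
prescribed values. -/
theorem stmt9 [Fintype V] (G : SimpleGraph V) (hbl : Bridgeless G)
    (v : V) (hdeg : (G.neighborSet v).ncard = 3)
    (e₁ e₂ e₃ : Sym2 V)
    (h₁ : e₁ ∈ G.incidenceSet v) (h₂ : e₂ ∈ G.incidenceSet v) (h₃ : e₃ ∈ G.incidenceSet v)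
    (hne₁₂ : e₁ ≠ e₂) (hne₁₃ : e₁ ≠ e₃) (hne₂₃ : e₂ ≠ e₃)
    (τ : V → Sym2 V → ℤ) (hτ : IsOrientation G allPos τ)
    (hdir : (τ v e₁ = -1 ∧ τ v e₂ = -1 ∧ τ v e₃ = -1) ∨
      (τ v e₁ = 1 ∧ τ v e₂ = 1 ∧ τ v e₃ = 1))
    (x : ℤ) (hx1 : 1 ≤ x) (hx4 : x ≤ 4)
    (ψ : Sym2 V → ZMod 6)
    (hK : ∀ w : V, (∑ z : V, if G.Adj w z then (τ w s(w, z) : ZMod 6) * ψ s(w, z) else 0) = 0)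
    (hnz : ∀ e ∈ G.edgeSet, ψ e ≠ 0)
    (hv1 : ψ e₁ = 1) (hv2 : ψ e₂ = (x : ZMod 6)) (hv3 : ψ e₃ = ((-1 - x : ℤ) : ZMod 6)) :
    ∃ φ' : Sym2 V → ℤ, IsFlow G allPos τ φ' ∧
      (∀ e ∈ G.edgeSet, 0 < |φ' e| ∧ |φ' e| < 6) ∧
      φ' e₁ = 1 ∧ φ' e₂ = x ∧ φ' e₃ = -1 - x :=
  stmt9_general G v hdeg e₁ e₂ e₃ h₁ h₂ h₃ hne₁₂ hne₁₃ hne₂₃ τ hτ hdir x hx1 hx4 ψ hK hnz hv1 hv2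
    hv3
end

section
/- Let G be a 3-edge-colorable cubic graph and let e₁, e₂ ∈ E(G). Then (G, 𝟙) has a nowhere-zero 4-flow (D, φ) with φ(f) > 0 for every edge f and φ(e₁) = φ(e₂) = 1. -/
open Finset SimpleGraph

attribute [local instance] Classical.propDecidable

variable {V : Type}

/-!
The union of two colour classes is a disjoint union of even circuits, so for every pair of
colours there is a `±1` labelling `d` of the vertices that changes sign along each edge of
those two colours, and sending an edge `u → w` to `d w` on the first colour and to `-d w` on
the second is a 2-flow. Order the colours so that `e₁` has the first one and `e₂` one of the
first two. The flow `φ₁ + 2 φ₂`, built from the pairs (first, second) and (second, third), is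
`±1` on the first class, `±1` or `±3` on the second and `±2` on the third; choosing the sign of
the second labelling to agree with the first at an end of `e₂` makes it `±1` on `e₂` as well.
Reversing the edges that carry a negative value gives a positive nowhere-zero 4-flow.
-/

open Function

theorem Equiv.Perm.not_sameCycle_mul_apply_self {α : Type*} {x y : Equiv.Perm α}
    (hx : x * x = 1) (hy : y * y = 1) (hx' : ∀ a, x a ≠ a) (hy' : ∀ a, y a ≠ a) (a : α) :
    ¬ (x * y).SameCycle a (x a) := by
  set p := x * y
  have hxinv : x⁻¹ = x := inv_eq_of_mul_eq_one_right hx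
  have hxp : x * p = y := by rw [← mul_assoc, hx, one_mul]
  -- `x` conjugates `p` to `p⁻¹`, so `x * p ^ k` is conjugate to `x` or to `y`, according to the
  -- parity of `k`, and has no fixed point
  have hconj : ∀ j : ℤ, x * p ^ j = p ^ (-j) * x := by
    intro j
    have hp : x * p * x⁻¹ = p⁻¹ := by
      rw [hxinv, hxp, mul_inv_rev, inv_eq_of_mul_eq_one_right hy, hxinv]
    rw [zpow_neg, ← inv_zpow, ← hp, conj_zpow, inv_mul_cancel_right]
  have hxx : x (x a) = a := by rw [← Perm.mul_apply, hx, Perm.one_apply]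
  rintro ⟨k, hk⟩
  obtain ⟨j, rfl | rfl⟩ := Int.even_or_odd' k
  · have h : p ^ j * (x * p ^ (2 * j)) = x * p ^ j := by
      conv_lhs => rw [two_mul, zpow_add, ← mul_assoc x, hconj j]
      group
    apply hx' ((p ^ j) a)
    simpa [Perm.mul_apply, hk, hxx] using (congrArg (· a) h).symm
  · have h : p ^ j * (x * p ^ (2 * j + 1)) = y * p ^ j := by
      rw [show 2 * j + 1 = j + (1 + j) by ring, zpow_add, ← mul_assoc x, hconj j, ← hxp]
      group
    apply hy' ((p ^ j) a)
    simpa [Perm.mul_apply, hk, hxx] using (congrArg (· a) h).symm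

theorem exists_sign_neg_of_involutive {α : Type*} {x y : α → α} (hx : Involutive x)
    (hy : Involutive y) (hx' : ∀ a, x a ≠ a) (hy' : ∀ a, y a ≠ a) (a₀ : α) {ε : ℤ}
    (hε : ε = 1 ∨ ε = -1) :
    ∃ d : α → ℤ, (∀ a, d a = 1 ∨ d a = -1) ∧ (∀ a, d (x a) = -d a) ∧
      (∀ a, d (y a) = -d a) ∧ d a₀ = ε := by
  have hxx : ∀ a, x (x a) = a := hx
  have hyy : ∀ a, y (y a) = a := hy
  set p := hx.toPerm x * hy.toPerm y
  let r : α → Quotient (Equiv.Perm.SameCycle.setoid p) := Quotient.mk _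
  have hrx (a : α) : r (x a) ≠ r a := fun h =>
    Equiv.Perm.not_sameCycle_mul_apply_self (x := hx.toPerm x) (y := hy.toPerm y)
      (by ext; simp [hxx]) (by ext; simp [hyy]) hx' hy' a (Quotient.exact h).symm
  have hry (a : α) : r (y a) = r (x a) := Quotient.sound ⟨1, by simp [p, hyy]⟩
  have hrxy (a : α) : r (x (y a)) = r a := Quotient.sound ⟨-1, by simp [p, hxx, hyy]⟩
  -- `r` takes two values on each alternating cycle, exchanged by both `x` and `y`
  let s (q q' : Quotient (Equiv.Perm.SameCycle.setoid p)) : ℤ :=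
    if WellOrderingRel q q' then 1 else -1
  have hs {q q'} (h : q ≠ q') : s q' q = -s q q' := by
    rcases trichotomous_of WellOrderingRel q q' with h' | rfl | h'
    · simp [s, h', asymm h']
    · exact absurd rfl h
    · simp [s, h', asymm h']
  let d₀ a := s (r a) (r (x a))
  have hd₀ a : d₀ a = 1 ∨ d₀ a = -1 := by simp only [d₀, s]; split_ifs <;> simp
  refine ⟨fun a => ε * d₀ a₀ * d₀ a, fun a => ?_, fun a => ?_, fun a => ?_, ?_⟩
  · rcases hε with rfl | rfl <;> rcases hd₀ a₀ with h | h <;> rcases hd₀ a with h' | h' <;>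
      simp [h, h']
  · simp only [d₀, hxx, hs (hrx a).symm]; ring
  · simp only [d₀, hry, hrxy, hs (hrx a).symm]; ring
  · rcases hd₀ a₀ with h | h <;> simp [h]

def IsDartFlow [Fintype V] (G : SimpleGraph V) (f : V → V → ℤ) : Prop :=
  (∀ u w, G.Adj u w → f w u = -f u w) ∧
    ∀ v, (∑ w : V, if G.Adj v w then f v w else 0) = 0

namespace IsDartFlow

variable [Fintype V] {G : SimpleGraph V} {f g : V → V → ℤ}

theorem add (hf : IsDartFlow G f) (hg : IsDartFlow G g) : IsDartFlow G (f + g) := by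
  refine ⟨fun u w h => ?_, fun v => ?_⟩
  · simp only [Pi.add_apply, hf.1 u w h, hg.1 u w h, neg_add]
  · simp only [Pi.add_apply, ite_add_zero, Finset.sum_add_distrib, hf.2 v, hg.2 v, add_zero]

theorem const_mul (hf : IsDartFlow G f) (n : ℤ) : IsDartFlow G (fun u w => n * f u w) := by
  refine ⟨fun u w h => show n * f w u = -(n * f u w) by rw [hf.1 u w h, mul_neg], fun v => ?_⟩
  simp only [← mul_ite_zero, ← Finset.mul_sum, hf.2 v, mul_zero]

theorem exists_isNZFlow_allPos (hf : IsDartFlow G f) {k : ℤ}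
    (hbound : ∀ u w, G.Adj u w → f u w ≠ 0 ∧ |f u w| < k) :
    ∃ τ φ, IsNZFlow G allPos k τ φ ∧ (∀ e ∈ G.edgeSet, 0 < φ e) ∧
      ∀ u w, G.Adj u w → φ s(u, w) = |f u w| := by
  let sgn (a : ℤ) : ℤ := if 0 ≤ a then 1 else -1
  have hsgn (a : ℤ) : sgn a = 1 ∨ sgn a = -1 := by simp only [sgn]; split_ifs <;> simp
  have hsgn_mul (a : ℤ) : sgn a * |a| = a := by
    simp only [sgn]; split_ifs with h
    · rw [one_mul, abs_of_nonneg h]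
    · rw [abs_of_neg (not_le.mp h), neg_one_mul, neg_neg]
  let τ (v : V) (e : Sym2 V) : ℤ := if h : v ∈ e then sgn (f v (Sym2.Mem.other h)) else 1
  have hτ (v w : V) : τ v s(v, w) = sgn (f v w) := by
    simp only [τ, Sym2.mem_mk_left, dite_true,
      Sym2.congr_right.mp (Sym2.other_spec (Sym2.mem_mk_left v w))]
  let φ : Sym2 V → ℤ := Sym2.lift ⟨fun u w => if G.Adj u w then |f u w| else 0, fun u w => by
    dsimp only
    by_cases h : G.Adj u w
    · rw [if_pos h, if_pos h.symm, hf.1 u w h, abs_neg]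
    · rw [if_neg h, if_neg (fun h' => h h'.symm)]⟩
  have hφ (u w : V) (h : G.Adj u w) : φ s(u, w) = |f u w| := by simp [φ, h]
  refine ⟨τ, φ, ⟨⟨⟨fun v e => ?_, fun u w h => ?_⟩, fun v => ?_⟩, ?_⟩, ?_, hφ⟩
  · simp only [τ]; split_ifs
    exacts [hsgn _, Or.inl rfl]
  · rw [hτ, ← Sym2.eq_swap, hτ, hf.1 u w h]
    have := (hbound u w h).1
    simp only [sgn, allPos, Left.nonneg_neg_iff]
    split_ifs <;> omega
  · refine (Finset.sum_congr rfl fun w _ => ?_).trans (hf.2 v)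
    split_ifs with h
    · rw [hτ, hφ v w h, hsgn_mul]
    · rfl
  · rintro ⟨u, w⟩ h
    rw [hφ u w h, abs_abs]
    exact ⟨abs_pos.mpr (hbound u w h).1, (hbound u w h).2⟩
  · rintro ⟨u, w⟩ h
    rw [hφ u w h]
    exact abs_pos.mpr (hbound u w h).1

end IsDartFlow

def IsColorNeighbor (G : SimpleGraph V) (c : Sym2 V → Fin 3) (nb : Fin 3 → V → V) : Prop :=
  ∀ i v w, G.Adj v w ∧ c s(v, w) = i ↔ nb i v = w

theorem exists_isColorNeighbor [Fintype V] {G : SimpleGraph V} (hcubic : CubicGraph G)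
    {c : Sym2 V → Fin 3} (hc : IsProper3EdgeColoring G c) :
    ∃ nb, IsColorNeighbor G c nb := by
  have hbij (v : V) : Bijective fun w : G.neighborSet v => c s(v, w) := by
    refine (Nat.bijective_iff_injective_and_card _).mpr ⟨fun w w' h => ?_, ?_⟩
    · by_contra hne
      refine hc _ w.2 _ w'.2 ?_ ⟨v, Sym2.mem_mk_left _ _, Sym2.mem_mk_left _ _⟩ h
      rwa [Ne, Sym2.congr_right, ← Subtype.ext_iff]
    · rw [Nat.card_coe_set_eq, hcubic v, Nat.card_eq_fintype_card, Fintype.card_fin]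
  refine ⟨fun i v => ((Equiv.ofBijective _ (hbij v)).symm i : V), fun i v w => ⟨?_, ?_⟩⟩
  · rintro ⟨hw, rfl⟩
    exact congrArg Subtype.val ((Equiv.ofBijective _ (hbij v)).symm_apply_apply ⟨w, hw⟩)
  · rintro rfl
    exact ⟨((Equiv.ofBijective _ (hbij v)).symm i).2,
      (Equiv.ofBijective _ (hbij v)).apply_symm_apply i⟩

namespace IsColorNeighbor

variable {G : SimpleGraph V} {c : Sym2 V → Fin 3} {nb : Fin 3 → V → V}

theorem adj (hnb : IsColorNeighbor G c nb) (i : Fin 3) (v : V) : G.Adj v (nb i v) :=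
  ((hnb i v _).mpr rfl).1

theorem color (hnb : IsColorNeighbor G c nb) (i : Fin 3) (v : V) : c s(v, nb i v) = i :=
  ((hnb i v _).mpr rfl).2

theorem eq_of_adj (hnb : IsColorNeighbor G c nb) {u w : V} (h : G.Adj u w) :
    nb (c s(u, w)) u = w :=
  (hnb _ u w).mp ⟨h, rfl⟩

theorem involutive (hnb : IsColorNeighbor G c nb) (i : Fin 3) : Involutive (nb i) := fun v =>
  (hnb i _ v).mp ⟨(hnb.adj i v).symm, by rw [Sym2.eq_swap, hnb.color]⟩

theorem apply_ne (hnb : IsColorNeighbor G c nb) (i : Fin 3) (v : V) : nb i v ≠ v :=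
  (hnb.adj i v).ne.symm

theorem sum_adj [Fintype V] (hnb : IsColorNeighbor G c nb) (v : V) (F : V → ℤ) :
    (∑ w : V, if G.Adj v w then F w else 0) = ∑ i : Fin 3, F (nb i v) := by
  have hinj : Injective fun i => nb i v := fun i j h => by
    rw [← hnb.color i v, ← hnb.color j v]; exact congrArg _ (congrArg _ h)
  have himage : Finset.univ.filter (G.Adj v) = Finset.univ.image fun i => nb i v := by
    ext w
    simp only [Finset.mem_filter, Finset.mem_univ, true_and, Finset.mem_image]
    exact ⟨fun h => ⟨_, hnb.eq_of_adj h⟩, by rintro ⟨i, rfl⟩; exact hnb.adj i v⟩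
  rw [← Finset.sum_filter, himage, Finset.sum_image fun i _ j _ h => hinj h]

end IsColorNeighbor

def twoColorFlow (c : Sym2 V → Fin 3) (i j : Fin 3) (d : V → ℤ) (u w : V) : ℤ :=
  if c s(u, w) = i then d w else if c s(u, w) = j then -d w else 0

theorem IsColorNeighbor.isDartFlow_twoColorFlow [Fintype V] {G : SimpleGraph V}
    {c : Sym2 V → Fin 3} {nb : Fin 3 → V → V} (hnb : IsColorNeighbor G c nb) {i j : Fin 3}
    (hij : i ≠ j) {d : V → ℤ} (hdi : ∀ v, d (nb i v) = -d v) (hdj : ∀ v, d (nb j v) = -d v) :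
    IsDartFlow G (twoColorFlow c i j d) := by
  refine ⟨fun u w h => ?_, fun v => ?_⟩
  · simp only [twoColorFlow, Sym2.eq_swap (a := w)]
    split_ifs with hi hj
    · have := hdi u; rw [← hi, hnb.eq_of_adj h] at this; omega
    · have := hdj u; rw [← hj, hnb.eq_of_adj h] at this; omega
    · rw [neg_zero]
  · rw [hnb.sum_adj]
    simp [twoColorFlow, hnb.color, Finset.sum_ite, Finset.filter_eq', hij.symm, hdi, hdj]

theorem Fin.exists_perm_three (a b : Fin 3) :
    ∃ σ : Equiv.Perm (Fin 3), σ 0 = a ∧ (b = σ 0 ∨ b = σ 1) := by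
  revert a b; decide

def colorFourFlow (c : Sym2 V → Fin 3) (σ : Equiv.Perm (Fin 3)) (d₁ d₂ : V → ℤ) (u w : V) : ℤ :=
  twoColorFlow c (σ 0) (σ 1) d₁ u w + 2 * twoColorFlow c (σ 1) (σ 2) d₂ u w

section colorFourFlow

variable {c : Sym2 V → Fin 3} {σ : Equiv.Perm (Fin 3)} {d₁ d₂ : V → ℤ} {u w : V}

theorem colorFourFlow_of_eq_zero (h : c s(u, w) = σ 0) : colorFourFlow c σ d₁ d₂ u w = d₁ w := by
  simp [colorFourFlow, twoColorFlow, h]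

theorem colorFourFlow_of_eq_one (h : c s(u, w) = σ 1) :
    colorFourFlow c σ d₁ d₂ u w = -d₁ w + 2 * d₂ w := by
  simp [colorFourFlow, twoColorFlow, h]

theorem colorFourFlow_of_eq_two (h : c s(u, w) = σ 2) :
    colorFourFlow c σ d₁ d₂ u w = -(2 * d₂ w) := by
  simp [colorFourFlow, twoColorFlow, h]

theorem colorFourFlow_ne_zero_and_abs_lt (hd₁ : ∀ v, d₁ v = 1 ∨ d₁ v = -1)
    (hd₂ : ∀ v, d₂ v = 1 ∨ d₂ v = -1) (u w : V) :
    colorFourFlow c σ d₁ d₂ u w ≠ 0 ∧ |colorFourFlow c σ d₁ d₂ u w| < 4 := by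
  obtain ⟨k, hk⟩ := σ.surjective (c s(u, w))
  fin_cases k
  · rw [colorFourFlow_of_eq_zero hk.symm]; rcases hd₁ w with h | h <;> simp [h]
  · rw [colorFourFlow_of_eq_one hk.symm]
    rcases hd₁ w with h | h <;> rcases hd₂ w with h' | h' <;> simp [h, h']
  · rw [colorFourFlow_of_eq_two hk.symm]; rcases hd₂ w with h | h <;> simp [h]

end colorFourFlow

/-- A 3-edge-colorable cubic graph has a nowhere-zero 4-flow with all
values positive and value 1 on two prescribed edges. -/
theorem stmt12 [Fintype V] (G : SimpleGraph V) (hcubic : CubicGraph G)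
    (c : Sym2 V → Fin 3) (hc : IsProper3EdgeColoring G c)
    (e₁ e₂ : Sym2 V) (he₁ : e₁ ∈ G.edgeSet) (he₂ : e₂ ∈ G.edgeSet) :
    ∃ τ φ, IsNZFlow G allPos 4 τ φ ∧ (∀ f ∈ G.edgeSet, 0 < φ f) ∧
      φ e₁ = 1 ∧ φ e₂ = 1 := by
  obtain ⟨nb, hnb⟩ := exists_isColorNeighbor hcubic hc
  rcases e₁ with ⟨u₁, w₁⟩
  rcases e₂ with ⟨u₂, w₂⟩
  obtain ⟨σ, hσ₁, hσ₂⟩ := Fin.exists_perm_three (c s(u₁, w₁)) (c s(u₂, w₂))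
  obtain ⟨d₁, hd₁, hd₁₀, hd₁₁, -⟩ := exists_sign_neg_of_involutive (hnb.involutive (σ 0))
    (hnb.involutive (σ 1)) (hnb.apply_ne _) (hnb.apply_ne _) w₁ (Or.inl rfl)
  obtain ⟨d₂, hd₂, hd₂₁, hd₂₂, hd₂w⟩ := exists_sign_neg_of_involutive (hnb.involutive (σ 1))
    (hnb.involutive (σ 2)) (hnb.apply_ne _) (hnb.apply_ne _) w₂ (hd₁ w₂)
  have hflow : IsDartFlow G (colorFourFlow c σ d₁ d₂) :=
    (hnb.isDartFlow_twoColorFlow (σ.injective.ne (by decide)) hd₁₀ hd₁₁).add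
      ((hnb.isDartFlow_twoColorFlow (σ.injective.ne (by decide)) hd₂₁ hd₂₂).const_mul 2)
  obtain ⟨τ, φ, hφ, hpos, hφf⟩ := hflow.exists_isNZFlow_allPos fun u w _ =>
    colorFourFlow_ne_zero_and_abs_lt hd₁ hd₂ u w
  refine ⟨τ, φ, hφ, hpos, ?_, ?_⟩
  · rw [hφf _ _ he₁, colorFourFlow_of_eq_zero hσ₁.symm]
    rcases hd₁ w₁ with h | h <;> simp [h]
  · rw [hφf _ _ he₂]
    rcases hσ₂ with h | h
    · rw [colorFourFlow_of_eq_zero h]; rcases hd₁ w₂ with h | h <;> simp [h]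
    · rw [colorFourFlow_of_eq_one h, hd₂w]; rcases hd₁ w₂ with h | h <;> simp [h]
end
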